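/- arXiv:math-ph/0511064 — 11 statements merged into one kernel-verified Lean document; each statement's English description precedes it below -/
import Mathlib

section
/- If f : ℝ → ℝ is smooth with f′ ∈ 𝒮(ℝ), then the limits lim_{x→+∞} f(x) and lim_{x→−∞} f(x) exist and are finite; if moreover these two limits are equal to a common value L ∈ ℝ, then f − L ∈ 𝒮(ℝ). (This realizes the group quotient 𝒮 = ∂₀⁻¹𝒮 / ℝ.) -/
open Filter Topology MeasureTheory Set

lemma ftc_aux (f : ℝ → ℝ) (hf : ContDiff ℝ (⊤ : ℕ∞) f) (g : SchwartzMap ℝ ℝ)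
    (hg : ⇑g = deriv f) (a b : ℝ) : ∫ t in a..b, g t = f b - f a := by
  rw [hg]
  exact intervalIntegral.integral_deriv_eq_sub
    (fun x _ => (hf.differentiable (by simp)) x)
    (hg ▸ g.integrable.intervalIntegrable)

/-- If `f : ℝ → ℝ` is smooth with `f' ∈ 𝒮(ℝ)`, then the limits of `f`
at `+∞` and `−∞` exist and are finite; if moreover these two limits are equal to a common
value `L`, then `f − L ∈ 𝒮(ℝ)`.  (This realizes the quotient `𝒮 = ∂₀⁻¹𝒮 / ℝ`.) -/
theorem stmt_1 (f : ℝ → ℝ) (hf : ContDiff ℝ (⊤ : ℕ∞) f)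
    (hf' : ∃ g : SchwartzMap ℝ ℝ, ⇑g = deriv f) :
    ((∃ Lp : ℝ, Tendsto f atTop (𝓝 Lp)) ∧ (∃ Lm : ℝ, Tendsto f atBot (𝓝 Lm))) ∧
    (∀ L : ℝ, Tendsto f atTop (𝓝 L) → Tendsto f atBot (𝓝 L) →
      ∃ g : SchwartzMap ℝ ℝ, ∀ x, g x = f x - L) := by
  obtain ⟨g, hg⟩ := hf'
  have hgi : Integrable (⇑g) := g.integrable
  have hftc : ∀ a b : ℝ, ∫ t in a..b, g t = f b - f a := ftc_aux f hf g hg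
  have htop : ∀ a : ℝ, Tendsto f atTop (𝓝 (f a + ∫ t in Ioi a, g t)) := by
    intro a
    have h1 : Tendsto (fun b => f a + ∫ t in a..b, g t) atTop
        (𝓝 (f a + ∫ t in Ioi a, g t)) :=
      tendsto_const_nhds.add
        (intervalIntegral_tendsto_integral_Ioi a hgi.integrableOn tendsto_id)
    refine h1.congr fun b => ?_
    rw [hftc a b]; ring
  have hbot : ∀ a : ℝ, Tendsto f atBot (𝓝 (f a - ∫ t in Iic a, g t)) := by
    intro a
    have h1 : Tendsto (fun b => f a - ∫ t in b..a, g t) atBot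
        (𝓝 (f a - ∫ t in Iic a, g t)) :=
      tendsto_const_nhds.sub
        (intervalIntegral_tendsto_integral_Iic a hgi.integrableOn tendsto_id)
    refine h1.congr fun b => ?_
    rw [hftc b a]; ring
  refine ⟨⟨⟨_, htop 0⟩, ⟨_, hbot 0⟩⟩, ?_⟩
  intro L hT hB
  have hreprT : ∀ x : ℝ, f x - L = -∫ t in Ioi x, g t := by
    intro x
    have := tendsto_nhds_unique hT (htop x)
    rw [this]; ring
  have hreprB : ∀ x : ℝ, f x - L = ∫ t in Iic x, g t := by
    intro x
    have := tendsto_nhds_unique hB (hbot x)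
    rw [this]; ring
  refine ⟨⟨fun x => f x - L, (hf.sub contDiff_const).of_le (by simp), ?_⟩, fun x => rfl⟩
  intro k n
  match n with
  | Nat.succ m =>
    obtain ⟨C, -, hC⟩ := g.decay k m
    refine ⟨C, fun x => ?_⟩
    have hd : iteratedDeriv (m + 1) (fun x => f x - L) x = iteratedDeriv m (⇑g) x := by
      rw [iteratedDeriv_succ']
      congr 1
      funext y
      rw [hg]
      exact deriv_sub_const L
    calc ‖x‖ ^ k * ‖iteratedFDeriv ℝ (m + 1) (fun x => f x - L) x‖
        = ‖x‖ ^ k * ‖iteratedFDeriv ℝ m (⇑g) x‖ := by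
          rw [norm_iteratedFDeriv_eq_norm_iteratedDeriv, hd,
            ← norm_iteratedFDeriv_eq_norm_iteratedDeriv]
      _ ≤ C := hC x
  | 0 =>
    set M : ℝ := 2 ^ (k + 2) *
      (Finset.Iic ((k + 2), 0)).sup (fun m' => SchwartzMap.seminorm ℝ m'.1 m'.2) g with hM
    have hMbound : ∀ t : ℝ, (1 + ‖t‖) ^ (k + 2) * ‖g t‖ ≤ M := by
      intro t
      have := SchwartzMap.one_add_le_sup_seminorm_apply (𝕜 := ℝ)
        (m := ((k + 2), 0)) (k := k + 2) (n := 0) le_rfl le_rfl g t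
      simpa using this
    have hmaj : ∀ t : ℝ, (1 + ‖t‖) ^ k * ‖g t‖ ≤ M * (1 + t ^ 2)⁻¹ := by
      intro t
      have h1 : (0:ℝ) < 1 + t ^ 2 := by positivity
      rw [← div_eq_mul_inv, le_div_iff₀ h1]
      calc (1 + ‖t‖) ^ k * ‖g t‖ * (1 + t ^ 2)
          ≤ (1 + ‖t‖) ^ k * ‖g t‖ * (1 + ‖t‖) ^ 2 := by
            have : 1 + t ^ 2 ≤ (1 + ‖t‖) ^ 2 := by
              rw [Real.norm_eq_abs]
              nlinarith [abs_nonneg t, sq_abs t]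
            exact mul_le_mul_of_nonneg_left this (by positivity)
        _ = (1 + ‖t‖) ^ (k + 2) * ‖g t‖ := by ring
        _ ≤ M := hMbound t
    have hint2 : Integrable (fun t : ℝ => M * (1 + t ^ 2)⁻¹) :=
      integrable_inv_one_add_sq.const_mul M
    have hint2nn : ∀ t : ℝ, 0 ≤ M * (1 + t ^ 2)⁻¹ := by
      intro t
      have h0 : (0:ℝ) ≤ M := le_trans (by positivity) (hMbound 0)
      positivity
    have hgint_k : Integrable (fun t : ℝ => (1 + ‖t‖) ^ k * ‖g t‖) := by
      refine hint2.mono' ?_ ?_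
      · exact (((continuous_const.add continuous_norm).pow k).mul
          g.continuous.norm).aestronglyMeasurable
      · filter_upwards with t
        rw [Real.norm_of_nonneg (by positivity)]
        exact hmaj t
    refine ⟨∫ t : ℝ, M * (1 + t ^ 2)⁻¹, fun x => ?_⟩
    have key : ∀ s : Set ℝ, MeasurableSet s → (∀ t ∈ s, ‖x‖ ^ k ≤ (1 + ‖t‖) ^ k) →
        ‖x‖ ^ k * ‖∫ t in s, g t‖ ≤ ∫ t : ℝ, M * (1 + t ^ 2)⁻¹ := by
      intro s hs hts
      calc ‖x‖ ^ k * ‖∫ t in s, g t‖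
          ≤ ‖x‖ ^ k * ∫ t in s, ‖g t‖ :=
            mul_le_mul_of_nonneg_left (norm_integral_le_integral_norm _) (by positivity)
        _ = ∫ t in s, ‖x‖ ^ k * ‖g t‖ := (integral_const_mul _ _).symm
        _ ≤ ∫ t in s, (1 + ‖t‖) ^ k * ‖g t‖ := by
            refine setIntegral_mono_on ((hgi.norm.const_mul _).integrableOn)
              hgint_k.integrableOn hs fun t ht => ?_
            exact mul_le_mul_of_nonneg_right (hts t ht) (norm_nonneg _)
        _ ≤ ∫ t in s, M * (1 + t ^ 2)⁻¹ :=
            setIntegral_mono_on hgint_k.integrableOn hint2.integrableOn hs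
              fun t _ => hmaj t
        _ ≤ ∫ t : ℝ, M * (1 + t ^ 2)⁻¹ :=
            setIntegral_le_integral hint2 (Eventually.of_forall hint2nn)
    rw [norm_iteratedFDeriv_zero]
    show ‖x‖ ^ k * ‖f x - L‖ ≤ _
    rcases le_or_gt 0 x with hx | hx
    · rw [hreprT x, norm_neg]
      refine key (Ioi x) measurableSet_Ioi fun t ht => ?_
      have : ‖x‖ ≤ 1 + ‖t‖ := by
        rw [Real.norm_of_nonneg hx]
        have : x ≤ t := le_of_lt ht
        have := le_abs_self t
        rw [Real.norm_eq_abs]; linarith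
      exact pow_le_pow_left₀ (norm_nonneg x) this k
    · rw [hreprB x]
      refine key (Iic x) measurableSet_Iic fun t ht => ?_
      have : ‖x‖ ≤ 1 + ‖t‖ := by
        rw [Real.norm_eq_abs, Real.norm_eq_abs, abs_of_neg hx]
        have : t ≤ x := ht
        have := neg_le_abs t
        linarith
      exact pow_le_pow_left₀ (norm_nonneg x) this k
end

section
/- The degeneracy subspace of (V_b, σ) equals N := {(0, n·𝟙) : n ∈ ℝ} (the pairs whose first component is 0 and whose second component is a constant function): an element F = (f₀,f₁) ∈ V_b satisfies σ(F,G) = 0 for all G ∈ V_b if and only if f₀ = 0 and f₁ is constant. The same holds with V_b replaced by V_e. In particular the two degenerate spaces V_b and V_e have the same degeneracy subspace N ≅ ℝ. -/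
open MeasureTheory Filter Topology

/-- `f` is (the realization of) a real-valued Schwartz function. -/
def IsSchwartzFn (f : ℝ → ℝ) : Prop := ∃ g : SchwartzMap ℝ ℝ, ⇑g = f

/-- `f ∈ ∂𝒮`: `f` is the derivative of a Schwartz function. -/
def MemDS (f : ℝ → ℝ) : Prop := ∃ g : SchwartzMap ℝ ℝ, deriv ⇑g = f

/-- `f ∈ ∂⁻¹𝒮`: `f` is smooth with Schwartz derivative. -/
def MemDinvS (f : ℝ → ℝ) : Prop := ContDiff ℝ (⊤ : ℕ∞) f ∧ IsSchwartzFn (deriv f)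

/-- `f ∈ ∂₀⁻¹𝒮`: `f ∈ ∂⁻¹𝒮` with equal limits at `+∞` and `−∞`. -/
def MemDinv0S (f : ℝ → ℝ) : Prop :=
  MemDinvS f ∧ ∃ L : ℝ, Tendsto f atTop (𝓝 L) ∧ Tendsto f atBot (𝓝 L)

namespace Stmt3Aux

open Polynomial Real

noncomputable section

variable {b t : ℝ}

lemma contDiff_gauss {n : WithTop ℕ∞} (b t : ℝ) :
    ContDiff ℝ n (fun x : ℝ => rexp (-b * (x - t) ^ 2)) :=
  Real.contDiff_exp.comp (contDiff_const.mul ((contDiff_id.sub contDiff_const).pow 2))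

lemma hasDerivAt_gauss (b t x : ℝ) :
    HasDerivAt (fun x : ℝ => rexp (-b * (x - t) ^ 2))
      ((-2 * b * (x - t)) * rexp (-b * (x - t) ^ 2)) x := by
  have h1 : HasDerivAt (fun x : ℝ => -b * (x - t) ^ 2) (-b * (2 * (x - t) ^ 1 * 1)) x :=
    (((hasDerivAt_id x).sub_const t).pow 2).const_mul (-b)
  have h2 := h1.exp
  convert h2 using 1
  ring

lemma gauss_tendsto_pow_atTop (hb : 0 < b) (s : ℕ) :
    Tendsto (fun x : ℝ => |x| ^ s * rexp (-b * (x - t) ^ 2)) atTop (𝓝 0) := by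
  have h0 : Tendsto (fun y : ℝ => |y| ^ (s : ℝ) * rexp (-b * y ^ 2)) (cocompact ℝ) (𝓝 0) :=
    tendsto_rpow_abs_mul_exp_neg_mul_sq_cocompact hb s
  have hshift : Tendsto (fun x : ℝ => x - t) atTop atTop :=
    tendsto_atTop_add_const_right atTop (-t) tendsto_id
  have h1 : Tendsto (fun x : ℝ => |x - t| ^ (s : ℝ) * rexp (-b * (x - t) ^ 2)) atTop (𝓝 0) :=
    h0.comp (hshift.mono_right _root_.atTop_le_cocompact)
  have h2 : Tendsto (fun x : ℝ => 2 ^ s * (|x - t| ^ s * rexp (-b * (x - t) ^ 2))) atTop (𝓝 0) := by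
    have h1' : Tendsto (fun x : ℝ => |x - t| ^ s * rexp (-b * (x - t) ^ 2)) atTop (𝓝 0) := by
      refine h1.congr fun x => ?_
      rw [Real.rpow_natCast]
    simpa using h1'.const_mul ((2:ℝ) ^ s)
  refine squeeze_zero' ?_ ?_ h2
  · filter_upwards with x; positivity
  · filter_upwards [eventually_ge_atTop (2 * |t|)] with x hx
    have habs : 2 * |t| ≤ |x| := by
      rw [abs_of_nonneg (le_trans (by positivity) hx)]; exact hx
    have h4 : |x| ≤ 2 * |x - t| := by
      have := abs_sub_abs_le_abs_sub x t; linarith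
    have h5 : |x| ^ s ≤ (2 * |x - t|) ^ s := pow_le_pow_left₀ (abs_nonneg x) h4 s
    rw [mul_pow] at h5
    have := Real.exp_pos (-b * (x - t) ^ 2)
    calc |x| ^ s * rexp (-b * (x - t) ^ 2) ≤ (2 ^ s * |x - t| ^ s) * rexp (-b * (x - t) ^ 2) := by
          exact mul_le_mul_of_nonneg_right h5 this.le
      _ = 2 ^ s * (|x - t| ^ s * rexp (-b * (x - t) ^ 2)) := by ring

lemma gauss_tendsto_pow_atBot (hb : 0 < b) (s : ℕ) :
    Tendsto (fun x : ℝ => |x| ^ s * rexp (-b * (x - t) ^ 2)) atBot (𝓝 0) := by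
  have h0 : Tendsto (fun y : ℝ => |y| ^ (s : ℝ) * rexp (-b * y ^ 2)) (cocompact ℝ) (𝓝 0) :=
    tendsto_rpow_abs_mul_exp_neg_mul_sq_cocompact hb s
  have hshift : Tendsto (fun x : ℝ => x - t) atBot atBot :=
    tendsto_atBot_add_const_right atBot (-t) tendsto_id
  have h1 : Tendsto (fun x : ℝ => |x - t| ^ (s : ℝ) * rexp (-b * (x - t) ^ 2)) atBot (𝓝 0) :=
    h0.comp (hshift.mono_right _root_.atBot_le_cocompact)
  have h2 : Tendsto (fun x : ℝ => 2 ^ s * (|x - t| ^ s * rexp (-b * (x - t) ^ 2))) atBot (𝓝 0) := by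
    have h1' : Tendsto (fun x : ℝ => |x - t| ^ s * rexp (-b * (x - t) ^ 2)) atBot (𝓝 0) := by
      refine h1.congr fun x => ?_
      rw [Real.rpow_natCast]
    simpa using h1'.const_mul ((2:ℝ) ^ s)
  refine squeeze_zero' ?_ ?_ h2
  · filter_upwards with x; positivity
  · filter_upwards [eventually_le_atBot (-(2 * |t|))] with x hx
    have habs : 2 * |t| ≤ |x| := by
      rw [abs_of_nonpos (hx.trans (neg_nonpos.mpr (by positivity)))]; linarith
    have h4 : |x| ≤ 2 * |x - t| := by
      have := abs_sub_abs_le_abs_sub x t; linarith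
    have h5 : |x| ^ s ≤ (2 * |x - t|) ^ s := pow_le_pow_left₀ (abs_nonneg x) h4 s
    rw [mul_pow] at h5
    have := Real.exp_pos (-b * (x - t) ^ 2)
    calc |x| ^ s * rexp (-b * (x - t) ^ 2) ≤ (2 ^ s * |x - t| ^ s) * rexp (-b * (x - t) ^ 2) := by
          exact mul_le_mul_of_nonneg_right h5 this.le
      _ = 2 ^ s * (|x - t| ^ s * rexp (-b * (x - t) ^ 2)) := by ring

lemma gauss_pow_bound (hb : 0 < b) (s : ℕ) :
    ∃ C, ∀ x : ℝ, |x| ^ s * rexp (-b * (x - t) ^ 2) ≤ C := by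
  have hc : Continuous (fun x : ℝ => |x| ^ s * rexp (-b * (x - t) ^ 2)) := by
    fun_prop
  -- reuse boundedness from limits
  have htop' : Tendsto (fun x : ℝ => ‖|x| ^ s * rexp (-b * (x - t) ^ 2)‖) atTop (𝓝 0) := by
    simpa using (gauss_tendsto_pow_atTop hb s (t := t)).norm
  have hbot' : Tendsto (fun x : ℝ => ‖|x| ^ s * rexp (-b * (x - t) ^ 2)‖) atBot (𝓝 0) := by
    simpa using (gauss_tendsto_pow_atBot hb s (t := t)).norm
  obtain ⟨a1, ha1⟩ := (Filter.eventually_atTop).mp (htop'.eventually_le_const one_pos)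
  obtain ⟨a2, ha2⟩ := (Filter.eventually_atBot).mp (hbot'.eventually_le_const one_pos)
  obtain ⟨C, hC⟩ := (isCompact_Icc (a := a2) (b := a1)).exists_bound_of_continuousOn
    hc.continuousOn
  refine ⟨max C 1, fun x => ?_⟩
  have hle : |x| ^ s * rexp (-b * (x - t) ^ 2) ≤ ‖|x| ^ s * rexp (-b * (x - t) ^ 2)‖ :=
    le_abs_self _
  rcases le_total a1 x with h | h
  · exact hle.trans ((ha1 x h).trans (le_max_right _ _))
  rcases le_total x a2 with h' | h'
  · exact hle.trans ((ha2 x h').trans (le_max_right _ _))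
  · exact hle.trans ((hC x ⟨h', h⟩).trans (le_max_left _ _))

lemma gauss_poly_bound (hb : 0 < b) (q : Polynomial ℝ) (k : ℕ) :
    ∃ C, ∀ x : ℝ, |x| ^ k * (|q.eval x| * rexp (-b * (x - t) ^ 2)) ≤ C := by
  induction q using Polynomial.induction_on' with
  | add p r hp hr =>
    obtain ⟨C1, h1⟩ := hp
    obtain ⟨C2, h2⟩ := hr
    refine ⟨C1 + C2, fun x => ?_⟩
    have habs : |(p + r).eval x| ≤ |p.eval x| + |r.eval x| := by
      rw [Polynomial.eval_add]; exact abs_add_le _ _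
    have e1 := h1 x
    have e2 := h2 x
    have hexp := (Real.exp_pos (-b * (x - t) ^ 2)).le
    have hxk : (0:ℝ) ≤ |x| ^ k := by positivity
    nlinarith [mul_nonneg hxk hexp, abs_nonneg (p.eval x), abs_nonneg (r.eval x)]
  | monomial m a =>
    obtain ⟨C, hC⟩ := gauss_pow_bound (t := t) hb (k + m)
    refine ⟨|a| * C, fun x => ?_⟩
    have : |x| ^ k * (|(Polynomial.monomial m a).eval x| * rexp (-b * (x - t) ^ 2))
        = |a| * (|x| ^ (k + m) * rexp (-b * (x - t) ^ 2)) := by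
      rw [Polynomial.eval_monomial, abs_mul, abs_pow, pow_add]
      ring
    rw [this]
    exact mul_le_mul_of_nonneg_left (hC x) (abs_nonneg a)

lemma iteratedDeriv_gauss (b t : ℝ) (n : ℕ) :
    ∃ q : Polynomial ℝ, iteratedDeriv n (fun x : ℝ => rexp (-b * (x - t) ^ 2))
      = fun x => q.eval x * rexp (-b * (x - t) ^ 2) := by
  induction n with
  | zero => exact ⟨1, by funext x; simp⟩
  | succ n ih =>
    obtain ⟨q, hq⟩ := ih
    refine ⟨q.derivative + q * (Polynomial.C (-2 * b) * (Polynomial.X - Polynomial.C t)), ?_⟩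
    rw [iteratedDeriv_succ, hq]
    funext x
    have hd : HasDerivAt (fun x : ℝ => q.eval x * rexp (-b * (x - t) ^ 2))
        (q.derivative.eval x * rexp (-b * (x - t) ^ 2)
          + q.eval x * ((-2 * b * (x - t)) * rexp (-b * (x - t) ^ 2))) x :=
      (q.hasDerivAt x).mul (hasDerivAt_gauss b t x)
    rw [hd.deriv]
    simp only [Polynomial.eval_add, Polynomial.eval_mul, Polynomial.eval_C, Polynomial.eval_X,
      Polynomial.eval_sub]
    ring

/-- The Gaussian `exp (-b (x - t)²)` as a Schwartz map. -/
def gaussMap (b t : ℝ) (hb : 0 < b) : SchwartzMap ℝ ℝ where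
  toFun := fun x => rexp (-b * (x - t) ^ 2)
  smooth' := contDiff_gauss b t
  decay' := by
    intro k n
    obtain ⟨q, hq⟩ := iteratedDeriv_gauss b t n
    obtain ⟨C, hC⟩ := gauss_poly_bound (t := t) hb q k
    refine ⟨C, fun x => ?_⟩
    rw [norm_iteratedFDeriv_eq_norm_iteratedDeriv, hq]
    simp only [Real.norm_eq_abs, abs_mul, Real.abs_exp]
    exact hC x

lemma gaussMap_coe (b t : ℝ) (hb : 0 < b) :
    ⇑(gaussMap b t hb) = fun x => rexp (-b * (x - t) ^ 2) := rfl

open Complex in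
lemma eq_zero_of_integral_gauss_eq_zero {f₀ : ℝ → ℝ} (hint : Integrable f₀)
    (hcont : Continuous f₀)
    (H : ∀ a v : ℝ, 0 < a → (∫ x, f₀ x * rexp (-a * (x - v) ^ 2)) = 0) :
    ∀ v, f₀ v = 0 := by
  intro v
  have hf : Integrable (fun x : ℝ => (f₀ x : ℂ)) := hint.ofReal
  have hcf : ContinuousAt (fun x : ℝ => (f₀ x : ℂ)) v :=
    (Complex.continuous_ofReal.comp hcont).continuousAt
  have h1 := Real.tendsto_integral_gaussian_smul' hf hcf
  have h2 : ∀ᶠ (c : ℝ) in atTop,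
      (∫ w : ℝ, ((π * c : ℂ) ^ (Module.finrank ℝ ℝ / 2 : ℂ)
        * Complex.exp (-π ^ 2 * c * ‖v - w‖ ^ 2)) • (f₀ w : ℂ)) = 0 := by
    filter_upwards [eventually_gt_atTop (0:ℝ)] with c hc
    have key := H (π ^ 2 * c) v (by positivity)
    have hrw : ∀ w : ℝ, ((π * c : ℂ) ^ (Module.finrank ℝ ℝ / 2 : ℂ)
        * Complex.exp (-π ^ 2 * c * ‖v - w‖ ^ 2)) • (f₀ w : ℂ)
        = ((π * c : ℂ) ^ (Module.finrank ℝ ℝ / 2 : ℂ))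
          * ((f₀ w * rexp (-(π ^ 2 * c) * (w - v) ^ 2) : ℝ) : ℂ) := by
      intro w
      rw [smul_eq_mul]
      rw [show (-π ^ 2 * c * ‖v - w‖ ^ 2 : ℂ) = (((-(π ^ 2 * c) * (w - v) ^ 2 : ℝ)) : ℂ) by
        rw [Real.norm_eq_abs]
        norm_cast
        rw [_root_.sq_abs]
        ring]
      rw [← Complex.ofReal_exp]
      push_cast
      ring
    calc (∫ w : ℝ, ((π * c : ℂ) ^ (Module.finrank ℝ ℝ / 2 : ℂ)
            * Complex.exp (-π ^ 2 * c * ‖v - w‖ ^ 2)) • (f₀ w : ℂ))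
        = ∫ w : ℝ, ((π * c : ℂ) ^ (Module.finrank ℝ ℝ / 2 : ℂ))
            * ((f₀ w * rexp (-(π ^ 2 * c) * (w - v) ^ 2) : ℝ) : ℂ) := by
          exact integral_congr_ae (Filter.Eventually.of_forall hrw)
      _ = ((π * c : ℂ) ^ (Module.finrank ℝ ℝ / 2 : ℂ))
            * ∫ w : ℝ, ((f₀ w * rexp (-(π ^ 2 * c) * (w - v) ^ 2) : ℝ) : ℂ) :=
          integral_const_mul _ _
      _ = ((π * c : ℂ) ^ (Module.finrank ℝ ℝ / 2 : ℂ))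
            * ((∫ w : ℝ, f₀ w * rexp (-(π ^ 2 * c) * (w - v) ^ 2) : ℝ) : ℂ) := by
          congr 1
          exact integral_ofReal
      _ = 0 := by rw [key]; simp
  have h3 : Tendsto (fun c : ℝ =>
      (∫ w : ℝ, ((π * c : ℂ) ^ (Module.finrank ℝ ℝ / 2 : ℂ)
        * Complex.exp (-π ^ 2 * c * ‖v - w‖ ^ 2)) • (f₀ w : ℂ))) atTop (𝓝 0) :=
    (tendsto_congr' h2).mpr tendsto_const_nhds
  have := tendsto_nhds_unique h1 h3
  exact_mod_cast this

lemma schwartz_tendsto_atTop (g : SchwartzMap ℝ ℝ) : Tendsto g atTop (𝓝 0) :=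
  (zero_at_infty g).mono_left _root_.atTop_le_cocompact

lemma schwartz_tendsto_atBot (g : SchwartzMap ℝ ℝ) : Tendsto g atBot (𝓝 0) :=
  (zero_at_infty g).mono_left _root_.atBot_le_cocompact

lemma schwartz_deriv_coe (g : SchwartzMap ℝ ℝ) : ⇑(SchwartzMap.derivCLM ℝ ℝ g) = deriv ⇑g := by
  funext x; exact SchwartzMap.derivCLM_apply ℝ g x

lemma schwartz_bdd (g : SchwartzMap ℝ ℝ) : ∃ C, ∀ x, ‖g x‖ ≤ C :=
  ⟨(SchwartzMap.seminorm ℝ 0 0) g, fun x => SchwartzMap.norm_le_seminorm ℝ g x⟩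

/-- FTC on the real line. -/
lemma integral_deriv_real {f f' : ℝ → ℝ} {A B : ℝ}
    (hderiv : ∀ x, HasDerivAt f (f' x) x) (hint : Integrable f')
    (htop : Tendsto f atTop (𝓝 A)) (hbot : Tendsto f atBot (𝓝 B)) :
    ∫ x, f' x = A - B := by
  rw [← intervalIntegral.integral_Iic_add_Ioi (b := (0:ℝ)) hint.integrableOn hint.integrableOn,
    integral_Iic_of_hasDerivAt_of_tendsto' (fun x _ => hderiv x) hint.integrableOn hbot,
    integral_Ioi_of_hasDerivAt_of_tendsto' (fun x _ => hderiv x) hint.integrableOn htop]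
  ring

lemma integral_deriv_schwartz (g : SchwartzMap ℝ ℝ) : ∫ x, deriv (⇑g) x = 0 := by
  have h := integral_deriv_real (f := ⇑g) (f' := deriv ⇑g)
    (fun x => g.differentiableAt.hasDerivAt)
    (by rw [← schwartz_deriv_coe]; exact (SchwartzMap.derivCLM ℝ ℝ g).integrable)
    (schwartz_tendsto_atTop g) (schwartz_tendsto_atBot g)
  simpa using h

lemma bdd_of_tendsto {f : ℝ → ℝ} (hc : Continuous f) {A B : ℝ}
    (hA : Tendsto f atTop (𝓝 A)) (hB : Tendsto f atBot (𝓝 B)) :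
    ∃ C, ∀ x, ‖f x‖ ≤ C := by
  obtain ⟨a, ha⟩ := (eventually_atTop).mp
    ((hA.norm).eventually_le_const (lt_add_one ‖A‖))
  obtain ⟨b, hb⟩ := (eventually_atBot).mp
    ((hB.norm).eventually_le_const (lt_add_one ‖B‖))
  obtain ⟨C, hC⟩ := (isCompact_Icc (a := b) (b := a)).exists_bound_of_continuousOn
    hc.continuousOn
  refine ⟨max C (max (‖A‖ + 1) (‖B‖ + 1)), fun x => ?_⟩
  rcases le_total a x with h | h
  · exact le_trans (ha x h) (le_max_of_le_right (le_max_left _ _))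
  rcases le_total x b with h' | h'
  · exact le_trans (hb x h') (le_max_of_le_right (le_max_right _ _))
  · exact le_trans (hC x ⟨h', h⟩) (le_max_left _ _)

lemma eq_zero_of_integral_mul_self {f : ℝ → ℝ} (hc : Continuous f)
    (hi : Integrable (fun x => f x * f x)) (h : (∫ x, f x * f x) = 0) : ∀ x, f x = 0 := by
  have hae : (fun x => f x * f x) =ᵐ[volume] 0 :=
    (integral_eq_zero_iff_of_nonneg (fun x => mul_self_nonneg (f x)) hi).mp h
  have heq : (fun x => f x * f x) = 0 :=
    ((hc.mul hc).ae_eq_iff_eq volume continuous_const).mp hae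
  exact fun x => mul_self_eq_zero.mp (congrFun heq x)

lemma memDS_zero : MemDS 0 :=
  ⟨0, by funext x; simp [show ⇑(0 : SchwartzMap ℝ ℝ) = fun _ => (0:ℝ) from rfl]⟩

lemma memDinvS_zero : MemDinvS 0 :=
  ⟨contDiff_const, 0, by funext x; simp [show (0 : ℝ → ℝ) = fun _ => (0:ℝ) from rfl,
    show ⇑(0 : SchwartzMap ℝ ℝ) = fun _ => (0:ℝ) from rfl]⟩

lemma memDinvS_limits {f : ℝ → ℝ} (hf : MemDinvS f) :
    (∃ A, Tendsto f atTop (𝓝 A)) ∧ (∃ B, Tendsto f atBot (𝓝 B)) := by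
  obtain ⟨hsm, s, hs⟩ := hf
  have hd : ∀ x, HasDerivAt f (deriv f x) x :=
    fun x => ((hsm.differentiable (by simp)) x).hasDerivAt
  have hint : Integrable (deriv f) := hs ▸ s.integrable
  exact ⟨⟨_, tendsto_limUnder_of_hasDerivAt_of_integrableOn_Ioi (a := 0)
      (fun x _ => hd x) hint.integrableOn⟩,
    ⟨_, tendsto_limUnder_of_hasDerivAt_of_integrableOn_Iic (a := 0)
      (fun x _ => hd x) hint.integrableOn⟩⟩

lemma memDinvS_gauss {a v : ℝ} (ha : 0 < a) :
    MemDinvS (fun x : ℝ => rexp (-a * (x - v) ^ 2)) := by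
  refine ⟨contDiff_gauss a v, SchwartzMap.derivCLM ℝ ℝ (gaussMap a v ha), ?_⟩
  rw [schwartz_deriv_coe, gaussMap_coe]

/-- The forward (hard) direction, with the pairing hypothesis only required against
test pairs that additionally have equal limits. -/
lemma forward {f₀ f₁ : ℝ → ℝ} (hf₀ : MemDS f₀) (hf₁ : MemDinvS f₁)
    (H : ∀ g₀ g₁ : ℝ → ℝ, MemDS g₀ → MemDinvS g₁ →
      (∃ L : ℝ, Tendsto g₁ atTop (𝓝 L) ∧ Tendsto g₁ atBot (𝓝 L)) →
      (∫ x, (f₀ x * g₁ x - f₁ x * g₀ x)) = 0) :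
    f₀ = 0 ∧ ∃ n : ℝ, f₁ = fun _ => n := by
  obtain ⟨g, hg⟩ := hf₀
  set G : SchwartzMap ℝ ℝ := SchwartzMap.derivCLM ℝ ℝ g with hGdef
  have hG : ⇑G = f₀ := by rw [hGdef, schwartz_deriv_coe, hg]
  obtain ⟨hsm, s, hs⟩ := hf₁
  -- Step 1 : f₀ = 0, by testing against Gaussians
  have hf₀0 : f₀ = 0 := by
    have key : ∀ a v : ℝ, 0 < a → (∫ x, f₀ x * rexp (-a * (x - v) ^ 2)) = 0 := by
      intro a v ha
      have h1 := H 0 (fun x : ℝ => rexp (-a * (x - v) ^ 2)) memDS_zero (memDinvS_gauss ha)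
        ⟨0, by rw [← gaussMap_coe a v ha]; exact schwartz_tendsto_atTop _,
          by rw [← gaussMap_coe a v ha]; exact schwartz_tendsto_atBot _⟩
      simpa using h1
    funext v
    exact eq_zero_of_integral_gauss_eq_zero (hG ▸ G.integrable) (hG ▸ G.continuous) key v
  -- Step 2 : f₁ is constant, by testing against (f₁'', 0)
  have h2 := H (deriv (deriv f₁)) 0 ⟨s, by rw [hs]⟩ memDinvS_zero
    ⟨0, tendsto_const_nhds, tendsto_const_nhds⟩
  simp only [Pi.zero_apply, mul_zero, zero_sub] at h2
  rw [integral_neg, neg_eq_zero] at h2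
  obtain ⟨⟨A, hA⟩, B, hB⟩ := memDinvS_limits ⟨hsm, s, hs⟩
  obtain ⟨C, hC⟩ := bdd_of_tendsto (hsm.continuous) hA hB
  have hd1 : ∀ x, HasDerivAt f₁ (deriv f₁ x) x :=
    fun x => ((hsm.differentiable (by simp)) x).hasDerivAt
  have hd2 : ∀ x, HasDerivAt (deriv f₁) (deriv (deriv f₁) x) x := by
    intro x; rw [← hs]; exact s.differentiableAt.hasDerivAt
  have hdtop : Tendsto (deriv f₁) atTop (𝓝 0) := hs ▸ schwartz_tendsto_atTop s
  have hdbot : Tendsto (deriv f₁) atBot (𝓝 0) := hs ▸ schwartz_tendsto_atBot s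
  have i1 : Integrable (fun x => deriv f₁ x * deriv f₁ x) := by
    rw [← hs]
    exact s.integrable.bdd_mul s.continuous.aestronglyMeasurable (Filter.Eventually.of_forall (schwartz_bdd s).choose_spec)
  have i2 : Integrable (fun x => f₁ x * deriv (deriv f₁) x) := by
    have hcoe : ⇑(SchwartzMap.derivCLM ℝ ℝ s) = deriv (deriv f₁) := by
      rw [schwartz_deriv_coe, hs]
    rw [← hcoe]
    exact (SchwartzMap.derivCLM ℝ ℝ s).integrable.bdd_mul
      hsm.continuous.aestronglyMeasurable (Filter.Eventually.of_forall hC)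
  have hφ : ∀ x, HasDerivAt (fun y => f₁ y * deriv f₁ y)
      (deriv f₁ x * deriv f₁ x + f₁ x * deriv (deriv f₁) x) x :=
    fun x => (hd1 x).mul (hd2 x)
  have htop : Tendsto (fun y => f₁ y * deriv f₁ y) atTop (𝓝 0) := by
    simpa using hA.mul hdtop
  have hbot : Tendsto (fun y => f₁ y * deriv f₁ y) atBot (𝓝 0) := by
    simpa using hB.mul hdbot
  have itot := integral_deriv_real hφ (i1.add i2) htop hbot
  rw [sub_zero, integral_add i1 i2, h2, add_zero] at itot
  have hderiv0 : ∀ x, deriv f₁ x = 0 :=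
    eq_zero_of_integral_mul_self (hs ▸ s.continuous) i1 itot
  refine ⟨hf₀0, f₁ 0, funext fun x => ?_⟩
  exact is_const_of_deriv_eq_zero (hsm.differentiable (by simp)) hderiv0 x 0

lemma backward {f₁ g₀ g₁ : ℝ → ℝ} (n : ℝ) (hf₁ : f₁ = fun _ => n) (hg₀ : MemDS g₀) :
    (∫ x, ((0 : ℝ → ℝ) x * g₁ x - f₁ x * g₀ x)) = 0 := by
  obtain ⟨h, hh⟩ := hg₀
  subst hf₁
  simp only [Pi.zero_apply, zero_mul, zero_sub]
  rw [integral_neg, neg_eq_zero, integral_const_mul, ← hh, integral_deriv_schwartz h, mul_zero]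

end

end Stmt3Aux

open Stmt3Aux in
/-- The degeneracy subspace of `(V_b, σ)`, `V_b = ∂𝒮 × ∂₀⁻¹𝒮`, equals
`N = {(0, n·𝟙) : n ∈ ℝ}`; the same holds with `V_b` replaced by `V_e = ∂𝒮 × ∂⁻¹𝒮`.
In particular both degenerate spaces have the same degeneracy subspace `N ≅ ℝ`. -/
theorem stmt_3 :
    (∀ f₀ f₁ : ℝ → ℝ, MemDS f₀ → MemDinv0S f₁ →
      ((∀ g₀ g₁ : ℝ → ℝ, MemDS g₀ → MemDinv0S g₁ →
          (∫ x, (f₀ x * g₁ x - f₁ x * g₀ x)) = 0) ↔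
        (f₀ = 0 ∧ ∃ n : ℝ, f₁ = fun _ => n))) ∧
    (∀ f₀ f₁ : ℝ → ℝ, MemDS f₀ → MemDinvS f₁ →
      ((∀ g₀ g₁ : ℝ → ℝ, MemDS g₀ → MemDinvS g₁ →
          (∫ x, (f₀ x * g₁ x - f₁ x * g₀ x)) = 0) ↔
        (f₀ = 0 ∧ ∃ n : ℝ, f₁ = fun _ => n))) := by
  constructor
  · intro f₀ f₁ hf₀ hf₁
    constructor
    · intro H
      exact forward hf₀ hf₁.1 fun g₀ g₁ hg₀ hg₁ hlim => H g₀ g₁ hg₀ ⟨hg₁, hlim⟩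
    · rintro ⟨rfl, n, hn⟩
      intro g₀ g₁ hg₀ _
      exact backward n hn hg₀
  · intro f₀ f₁ hf₀ hf₁
    constructor
    · intro H
      exact forward hf₀ hf₁ fun g₀ g₁ hg₀ hg₁ _ => H g₀ g₁ hg₀ hg₁
    · rintro ⟨rfl, n, hn⟩
      intro g₀ g₁ hg₀ _
      exact backward n hn hg₀
end

section
/- Fix a regularizing element t : ℝ → ℝ smooth with t′ ∈ 𝒮 and lim_{x→±∞} t(x) = ±1/2. Then for all F, G ∈ V_f the symplectic form decomposes as σ(F,G) = σ(F_t, G_t) + σ₂((F_c,F_n),(G_c,G_n)) + σ₂((F_r,F_q),(G_r,G_q)), i.e. σ(F,G) = σ(F_t,G_t) + (F_c·G_n − G_c·F_n) + (F_r·G_q − G_r·F_q). (This is the symplectic decomposition underlying the twisted crossed product description of the field algebra.) -/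
open MeasureTheory Filter Topology

lemma bdd_of_tendsto {f : ℝ → ℝ} {a b : ℝ} (hc : Continuous f)
    (hp : Tendsto f atTop (𝓝 a)) (hm : Tendsto f atBot (𝓝 b)) :
    ∃ C, ∀ x, ‖f x‖ ≤ C := by
  have h1 : ∀ᶠ x in atTop, ‖f x‖ ≤ ‖a‖ + 1 :=
    (hp.norm.eventually_le_const (lt_add_one ‖a‖))
  have h2 : ∀ᶠ x in atBot, ‖f x‖ ≤ ‖b‖ + 1 :=
    (hm.norm.eventually_le_const (lt_add_one ‖b‖))
  obtain ⟨A, hA⟩ := h1.exists_forall_of_atTop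
  obtain ⟨B, hB⟩ := h2.exists_forall_of_atBot
  obtain ⟨C, hC⟩ := (isCompact_Icc (a := B) (b := A)).exists_bound_of_continuousOn
    hc.continuousOn
  refine ⟨max C (max (‖a‖ + 1) (‖b‖ + 1)), fun x => ?_⟩
  rcases le_total x B with h | h
  · exact le_trans (hB x h) (le_max_of_le_right (le_max_right _ _))
  rcases le_total A x with h' | h'
  · exact le_trans (hA x h') (le_max_of_le_right (le_max_left _ _))
  · exact le_max_of_le_left (hC x ⟨h, h'⟩)

lemma schwartz_integrable {f : ℝ → ℝ} (hf : IsSchwartzFn f) : Integrable f := by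
  obtain ⟨g, hg⟩ := hf
  rw [← hg]; exact g.integrable

lemma integrable_mul_bdd {f g : ℝ → ℝ} {a b : ℝ} (hf : Integrable f) (hg : Continuous g)
    (hp : Tendsto g atTop (𝓝 a)) (hm : Tendsto g atBot (𝓝 b)) :
    Integrable (fun x => f x * g x) := by
  obtain ⟨C, hC⟩ := bdd_of_tendsto hg hp hm
  have := hf.bdd_mul hg.aestronglyMeasurable (ae_of_all _ hC)
  simpa [mul_comm] using this

/-- Fix a regularizing element `t` (smooth, `t' ∈ 𝒮`, `t(±∞) = ±1/2`).
For `F, G ∈ V_f = 𝒮 × ∂⁻¹𝒮` the symplectic form decomposes as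
`σ(F,G) = σ(F_t,G_t) + (F_c·G_n − G_c·F_n) + (F_r·G_q − G_r·F_q)`, where
`F_c = ∫ f₀`, `F_n = ∫ f₁ t'`, `F_r = ∫ f₀ t`, `F_q = F₊ − F₋`, `F_∞ = (F₊+F₋)/2`,
and `F_t = (f₀ − F_c·t', f₁ − F_q·t − F_∞)`. -/
theorem stmt_6 (t : ℝ → ℝ) (ht : ContDiff ℝ (⊤ : ℕ∞) t) (ht' : IsSchwartzFn (deriv t))
    (htp : Tendsto t atTop (𝓝 (1/2 : ℝ))) (htm : Tendsto t atBot (𝓝 (-(1/2) : ℝ)))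
    (f₀ f₁ g₀ g₁ : ℝ → ℝ)
    (hf₀ : IsSchwartzFn f₀) (hf₁ : MemDinvS f₁)
    (hg₀ : IsSchwartzFn g₀) (hg₁ : MemDinvS g₁)
    (Fp Fm Gp Gm : ℝ)
    (hFp : Tendsto f₁ atTop (𝓝 Fp)) (hFm : Tendsto f₁ atBot (𝓝 Fm))
    (hGp : Tendsto g₁ atTop (𝓝 Gp)) (hGm : Tendsto g₁ atBot (𝓝 Gm)) :
    (∫ x, (f₀ x * g₁ x - f₁ x * g₀ x)) =
      (∫ x, ((f₀ x - (∫ y, f₀ y) * deriv t x) * (g₁ x - (Gp - Gm) * t x - (Gp + Gm) / 2)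
           - (f₁ x - (Fp - Fm) * t x - (Fp + Fm) / 2) * (g₀ x - (∫ y, g₀ y) * deriv t x)))
      + ((∫ y, f₀ y) * (∫ x, g₁ x * deriv t x) - (∫ y, g₀ y) * (∫ x, f₁ x * deriv t x))
      + ((∫ x, f₀ x * t x) * (Gp - Gm) - (∫ x, g₀ x * t x) * (Fp - Fm)) := by
  have hct : Continuous t := ht.continuous
  have hcf1 : Continuous f₁ := hf₁.1.continuous
  have hcg1 : Continuous g₁ := hg₁.1.continuous
  have if0 : Integrable f₀ := schwartz_integrable hf₀
  have ig0 : Integrable g₀ := schwartz_integrable hg₀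
  have it' : Integrable (deriv t) := schwartz_integrable ht'
  set Fc := (∫ y, f₀ y) with hFc
  set Gc := (∫ y, g₀ y) with hGc
  -- integrability of the various products
  have i_fg : Integrable (fun x => f₀ x * g₁ x) := integrable_mul_bdd if0 hcg1 hGp hGm
  have i_gf : Integrable (fun x => f₁ x * g₀ x) := by
    simpa [mul_comm] using integrable_mul_bdd ig0 hcf1 hFp hFm
  have i_f0t : Integrable (fun x => f₀ x * t x) := integrable_mul_bdd if0 hct htp htm
  have i_g0t : Integrable (fun x => g₀ x * t x) := integrable_mul_bdd ig0 hct htp htm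
  have i_f1t' : Integrable (fun x => f₁ x * deriv t x) := by
    simpa [mul_comm] using integrable_mul_bdd it' hcf1 hFp hFm
  have i_g1t' : Integrable (fun x => g₁ x * deriv t x) := by
    simpa [mul_comm] using integrable_mul_bdd it' hcg1 hGp hGm
  have i_tt' : Integrable (fun x => t x * deriv t x) := by
    simpa [mul_comm] using integrable_mul_bdd it' hct htp htm
  -- FTC values
  have hderiv : ∀ x, HasDerivAt t (deriv t x) x :=
    fun x => (ht.differentiable (by simp) x).hasDerivAt
  have It' : (∫ x, deriv t x) = 1 := by
    rw [integral_of_hasDerivAt_of_tendsto hderiv it' htm htp]; norm_num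
  have Itt' : (∫ x, t x * deriv t x) = 0 := by
    have hd2 : ∀ x, HasDerivAt (fun y => t y * t y / 2) (t x * deriv t x) x := by
      intro x
      have := ((hderiv x).mul (hderiv x)).div_const 2
      exact this.congr_deriv (by ring)
    have hp2 : Tendsto (fun y => t y * t y / 2) atTop (𝓝 ((1/2 : ℝ) * (1/2) / 2)) :=
      (htp.mul htp).div_const 2
    have hm2 : Tendsto (fun y => t y * t y / 2) atBot (𝓝 ((-(1/2) : ℝ) * (-(1/2)) / 2)) :=
      (htm.mul htm).div_const 2
    rw [integral_of_hasDerivAt_of_tendsto hd2 i_tt' hm2 hp2]; norm_num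
  -- expand the big integral
  have key : (∫ x, ((f₀ x - Fc * deriv t x) * (g₁ x - (Gp - Gm) * t x - (Gp + Gm) / 2)
           - (f₁ x - (Fp - Fm) * t x - (Fp + Fm) / 2) * (g₀ x - Gc * deriv t x)))
      = (∫ x, (f₀ x * g₁ x - f₁ x * g₀ x))
        + (((Fp - Fm) * (∫ x, g₀ x * t x) - (Gp - Gm) * (∫ x, f₀ x * t x))
        + (((Fp + Fm)/2 * Gc - (Gp + Gm)/2 * Fc)
        + ((Gc * (∫ x, f₁ x * deriv t x) - Fc * (∫ x, g₁ x * deriv t x))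
        + ((Fc * (Gp - Gm) - Gc * (Fp - Fm)) * (∫ x, t x * deriv t x)
        + (Fc * ((Gp + Gm)/2) - Gc * ((Fp + Fm)/2)) * (∫ x, deriv t x))))) := by
    have h1 : (fun x => ((f₀ x - Fc * deriv t x) * (g₁ x - (Gp - Gm) * t x - (Gp + Gm) / 2)
           - (f₁ x - (Fp - Fm) * t x - (Fp + Fm) / 2) * (g₀ x - Gc * deriv t x)))
        = fun x => (f₀ x * g₁ x - f₁ x * g₀ x)
          + (((Fp - Fm) * (g₀ x * t x) - (Gp - Gm) * (f₀ x * t x))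
          + (((Fp + Fm)/2 * g₀ x - (Gp + Gm)/2 * f₀ x)
          + ((Gc * (f₁ x * deriv t x) - Fc * (g₁ x * deriv t x))
          + ((Fc * (Gp - Gm) - Gc * (Fp - Fm)) * (t x * deriv t x)
          + (Fc * ((Gp + Gm)/2) - Gc * ((Fp + Fm)/2)) * (deriv t x))))) := by
      funext x; ring
    rw [h1]
    have iA : Integrable (fun x => (Fp - Fm) * (g₀ x * t x) - (Gp - Gm) * (f₀ x * t x)) :=
      (i_g0t.const_mul (Fp - Fm)).sub (i_f0t.const_mul (Gp - Gm))
    have iB : Integrable (fun x => (Fp + Fm)/2 * g₀ x - (Gp + Gm)/2 * f₀ x) :=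
      (ig0.const_mul ((Fp + Fm)/2)).sub (if0.const_mul ((Gp + Gm)/2))
    have iC : Integrable (fun x => Gc * (f₁ x * deriv t x) - Fc * (g₁ x * deriv t x)) :=
      (i_f1t'.const_mul Gc).sub (i_g1t'.const_mul Fc)
    have iD : Integrable (fun x => (Fc * (Gp - Gm) - Gc * (Fp - Fm)) * (t x * deriv t x)
        + (Fc * ((Gp + Gm)/2) - Gc * ((Fp + Fm)/2)) * (deriv t x)) :=
      (i_tt'.const_mul _).add (it'.const_mul _)
    have iP : Integrable (fun x => f₀ x * g₁ x - f₁ x * g₀ x) := i_fg.sub i_gf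
    have iCD : Integrable (fun x => (Gc * (f₁ x * deriv t x) - Fc * (g₁ x * deriv t x))
        + ((Fc * (Gp - Gm) - Gc * (Fp - Fm)) * (t x * deriv t x)
          + (Fc * ((Gp + Gm)/2) - Gc * ((Fp + Fm)/2)) * (deriv t x))) := iC.add iD
    have iBCD : Integrable (fun x => ((Fp + Fm)/2 * g₀ x - (Gp + Gm)/2 * f₀ x)
        + ((Gc * (f₁ x * deriv t x) - Fc * (g₁ x * deriv t x))
        + ((Fc * (Gp - Gm) - Gc * (Fp - Fm)) * (t x * deriv t x)
          + (Fc * ((Gp + Gm)/2) - Gc * ((Fp + Fm)/2)) * (deriv t x)))) := iB.add iCD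
    have iABCD : Integrable (fun x => ((Fp - Fm) * (g₀ x * t x) - (Gp - Gm) * (f₀ x * t x))
        + (((Fp + Fm)/2 * g₀ x - (Gp + Gm)/2 * f₀ x)
        + ((Gc * (f₁ x * deriv t x) - Fc * (g₁ x * deriv t x))
        + ((Fc * (Gp - Gm) - Gc * (Fp - Fm)) * (t x * deriv t x)
          + (Fc * ((Gp + Gm)/2) - Gc * ((Fp + Fm)/2)) * (deriv t x))))) := iA.add iBCD
    have i1 : Integrable (fun x => (Fc * (Gp - Gm) - Gc * (Fp - Fm)) * (t x * deriv t x)) :=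
      i_tt'.const_mul _
    have i2 : Integrable (fun x => (Fc * ((Gp + Gm)/2) - Gc * ((Fp + Fm)/2)) * (deriv t x)) :=
      it'.const_mul _
    have i3 : Integrable (fun x => (Fp - Fm) * (g₀ x * t x)) := i_g0t.const_mul _
    have i4 : Integrable (fun x => (Gp - Gm) * (f₀ x * t x)) := i_f0t.const_mul _
    have i5 : Integrable (fun x => (Fp + Fm)/2 * g₀ x) := ig0.const_mul _
    have i6 : Integrable (fun x => (Gp + Gm)/2 * f₀ x) := if0.const_mul _
    have i7 : Integrable (fun x => Gc * (f₁ x * deriv t x)) := i_f1t'.const_mul _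
    have i8 : Integrable (fun x => Fc * (g₁ x * deriv t x)) := i_g1t'.const_mul _
    rw [integral_add iP iABCD,
      integral_add iA iBCD,
      integral_add iB iCD,
      integral_add iC iD,
      integral_add i1 i2,
      integral_sub i3 i4,
      integral_sub i5 i6,
      integral_sub i7 i8,
      integral_const_mul, integral_const_mul, integral_const_mul, integral_const_mul,
      integral_const_mul, integral_const_mul, integral_const_mul, integral_const_mul,
      ← hFc, ← hGc]
  rw [key, Itt', It']
  ring
end

section
/- Two elements F = (f₀,f₁) and F′ = (f₀′,f₁′) of V_f carry the same charges, i.e. F_c = F′_c and F_q = F′_q, if and only if their difference lies in V_b, i.e. f₀ − f₀′ ∈ ∂𝒮 and f₁ − f₁′ ∈ ∂₀⁻¹𝒮. (This is the essential-uniqueness statement: two regularizing choices with the same charge content differ by an element of V_b.) -/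
open MeasureTheory Filter Topology
open Set

section AuxLemmas

lemma schwartz_tendsto_atTop (g : SchwartzMap ℝ ℝ) : Tendsto ⇑g atTop (𝓝 0) :=
  (zero_at_infty g).mono_left (by rw [cocompact_eq_atBot_atTop]; exact le_sup_right)

lemma schwartz_tendsto_atBot (g : SchwartzMap ℝ ℝ) : Tendsto ⇑g atBot (𝓝 0) :=
  (zero_at_infty g).mono_left (by rw [cocompact_eq_atBot_atTop]; exact le_sup_left)

lemma integral_deriv_schwartz_eq_zero (g : SchwartzMap ℝ ℝ) : ∫ x, deriv (⇑g) x = 0 := by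
  have hcoe : ⇑(SchwartzMap.derivCLM ℝ ℝ g) = deriv ⇑g := funext fun x => rfl
  have hint : Integrable (deriv ⇑g) := hcoe ▸ (SchwartzMap.derivCLM ℝ ℝ g).integrable
  have hd : ∀ x : ℝ, HasDerivAt (⇑g) (deriv (⇑g) x) x := fun x =>
    (g.differentiable.differentiableAt).hasDerivAt
  have h1 : ∫ x in Iic (0:ℝ), deriv (⇑g) x = g 0 - 0 :=
    integral_Iic_of_hasDerivAt_of_tendsto' (fun x _ => hd x) hint.integrableOn
      (schwartz_tendsto_atBot g)
  have h2 : ∫ x in Ioi (0:ℝ), deriv (⇑g) x = 0 - g 0 :=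
    integral_Ioi_of_hasDerivAt_of_tendsto' (fun x _ => hd x) hint.integrableOn
      (schwartz_tendsto_atTop g)
  rw [← intervalIntegral.integral_Iic_add_Ioi hint.integrableOn hint.integrableOn, h1, h2]; ring

lemma aux_tail_bound {φ : ℝ → ℝ} (hφ : Integrable φ) {C : ℝ} (hC : 0 ≤ C) {k : ℕ}
    (hdecay : ∀ s : ℝ, 1 ≤ s → ‖φ s‖ ≤ C * s ^ (-(k:ℝ) - 2)) {y : ℝ} (hy : 1 ≤ y) :
    y ^ k * ‖∫ s in Ioi y, φ s‖ ≤ C := by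
  have hy0 : (0:ℝ) < y := lt_of_lt_of_le one_pos hy
  have ha : (-(k:ℝ) - 2) < -1 := by
    have : (0:ℝ) ≤ (k:ℝ) := Nat.cast_nonneg k
    linarith
  have hmaj : IntegrableOn (fun s : ℝ => C * s ^ (-(k:ℝ) - 2)) (Ioi y) :=
    (integrableOn_Ioi_rpow_of_lt ha hy0).const_mul C
  have h1 : ‖∫ s in Ioi y, φ s‖ ≤ ∫ s in Ioi y, ‖φ s‖ := norm_integral_le_integral_norm _
  have h2 : ∫ s in Ioi y, ‖φ s‖ ≤ ∫ s in Ioi y, C * s ^ (-(k:ℝ) - 2) := by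
    apply setIntegral_mono_on hφ.norm.integrableOn hmaj measurableSet_Ioi
    intro s hs
    exact hdecay s (hy.trans (le_of_lt hs))
  have h3 : ∫ s in Ioi y, C * s ^ (-(k:ℝ) - 2) = C * (-y ^ ((-(k:ℝ) - 2) + 1) / ((-(k:ℝ) - 2) + 1)) := by
    rw [integral_const_mul, integral_Ioi_rpow_of_lt ha hy0]
  have hval : -y ^ ((-(k:ℝ) - 2) + 1) / ((-(k:ℝ) - 2) + 1) = y ^ (-(k:ℝ) - 1) / ((k:ℝ) + 1) := by
    rw [show (-(k:ℝ) - 2) + 1 = -(((k:ℝ) + 1)) by ring]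
    rw [neg_div_neg_eq]
    congr 1
    ring
  have hbound : ‖∫ s in Ioi y, φ s‖ ≤ C * (y ^ (-(k:ℝ) - 1) / ((k:ℝ) + 1)) := by
    rw [← hval, ← h3]; exact h1.trans h2
  calc y ^ k * ‖∫ s in Ioi y, φ s‖ ≤ y ^ k * (C * (y ^ (-(k:ℝ) - 1) / ((k:ℝ) + 1))) := by
        apply mul_le_mul_of_nonneg_left hbound (by positivity)
    _ = C * (y ^ (k:ℝ) * y ^ (-(k:ℝ) - 1)) / ((k:ℝ) + 1) := by
        rw [← Real.rpow_natCast y k]; ring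
    _ = C * y ^ (-1 : ℝ) / ((k:ℝ) + 1) := by
        rw [← Real.rpow_add hy0]
        congr 2
        ring
    _ ≤ C := by
        have h4 : y ^ (-1 : ℝ) ≤ 1 := by
          rw [Real.rpow_neg_one]
          exact inv_le_one_of_one_le₀ hy
        have h5 : C * y ^ (-1:ℝ) ≤ C * 1 := mul_le_mul_of_nonneg_left h4 hC
        have h6 : (1:ℝ) ≤ (k:ℝ) + 1 := by have : (0:ℝ) ≤ (k:ℝ) := Nat.cast_nonneg k; linarith
        calc C * y ^ (-1 : ℝ) / ((k:ℝ) + 1) ≤ C * 1 / 1 := by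
              apply div_le_div₀ (by linarith) h5 one_pos h6
          _ = C := by ring

lemma exists_schwartz_antideriv (g : SchwartzMap ℝ ℝ) (h0 : ∫ x, g x = 0) :
    ∃ G : SchwartzMap ℝ ℝ, deriv ⇑G = ⇑g := by
  classical
  set H : ℝ → ℝ := fun x => ∫ t in Iic x, g t with hHdef
  have hint : Integrable ⇑g := g.integrable
  have hIic : ∀ x : ℝ, IntegrableOn (⇑g) (Iic x) := fun x => hint.integrableOn
  have hIoi : ∀ x : ℝ, IntegrableOn (⇑g) (Ioi x) := fun x => hint.integrableOn
  -- derivative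
  have hderiv : ∀ x : ℝ, HasDerivAt H (g x) x := by
    intro x
    have hfun : H = fun y => H x + ∫ t in x..y, g t := by
      funext y
      rw [hHdef]
      simp only
      rw [← intervalIntegral.integral_Iic_sub_Iic (hIic x) (hIic y)]
      ring
    rw [hfun]
    exact ((g.continuous.integral_hasStrictDerivAt x x).hasDerivAt).const_add (H x)
  have hHdiff : Differentiable ℝ H := fun x => (hderiv x).differentiableAt
  have hHderiv : deriv H = ⇑g := funext fun x => (hderiv x).deriv
  have hsmooth : ContDiff ℝ (⊤ : ℕ∞) H := by
    rw [contDiff_infty_iff_deriv]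
    exact ⟨hHdiff, hHderiv ▸ g.smooth'⟩
  -- H as minus tail integral
  have htail : ∀ x : ℝ, H x = -∫ t in Ioi x, g t := by
    intro x
    have := intervalIntegral.integral_Iic_add_Ioi (μ := volume) (f := ⇑g) (b := x)
      (hIic x) (hIoi x)
    rw [h0] at this
    have : H x + ∫ t in Ioi x, g t = 0 := this
    linarith
  -- decay of H itself
  have decay0 : ∀ k : ℕ, ∃ C : ℝ, ∀ x : ℝ, ‖x‖ ^ k * ‖H x‖ ≤ C := by
    intro k
    obtain ⟨C, hCpos, hC⟩ := g.decay (k + 2) 0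
    have hC' : ∀ s : ℝ, 1 ≤ |s| → ‖g s‖ ≤ C * |s| ^ (-(k:ℝ) - 2) := by
      intro s hs
      have h1 := hC s
      rw [norm_iteratedFDeriv_zero] at h1
      have hspos : (0:ℝ) < |s| := lt_of_lt_of_le one_pos hs
      have hpow : ‖s‖ ^ (k + 2) = |s| ^ ((k:ℝ) + 2) := by
        rw [Real.norm_eq_abs, ← Real.rpow_natCast]
        norm_num
      rw [hpow] at h1
      have h2 : ‖g s‖ ≤ C / |s| ^ ((k:ℝ) + 2) := by
        rw [le_div_iff₀ (Real.rpow_pos_of_pos hspos _)]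
        calc ‖g s‖ * |s| ^ ((k:ℝ) + 2) = |s| ^ ((k:ℝ) + 2) * ‖g s‖ := by ring
          _ ≤ C := h1
      calc ‖g s‖ ≤ C / |s| ^ ((k:ℝ) + 2) := h2
        _ = C * |s| ^ (-(k:ℝ) - 2) := by
            rw [div_eq_mul_inv, ← Real.rpow_neg (le_of_lt hspos)]
            congr 2
            ring
    set B : ℝ := ∫ t : ℝ, ‖g t‖ with hBdef
    have hB0 : 0 ≤ B := integral_nonneg fun t => norm_nonneg _
    refine ⟨max B C, ?_⟩
    intro x
    rcases le_total (|x|) 1 with hx | hx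
    · -- small x
      have h1 : ‖H x‖ ≤ B := by
        calc ‖H x‖ ≤ ∫ t in Iic x, ‖g t‖ := norm_integral_le_integral_norm _
          _ ≤ B := setIntegral_le_integral hint.norm
              (Filter.Eventually.of_forall fun t => norm_nonneg _)
      calc ‖x‖ ^ k * ‖H x‖ ≤ 1 * B := by
            apply mul_le_mul _ h1 (norm_nonneg _) one_pos.le
            calc ‖x‖ ^ k ≤ 1 ^ k := pow_le_pow_left₀ (norm_nonneg x) (Real.norm_eq_abs x ▸ hx) k
              _ = 1 := one_pow k
        _ = B := one_mul B
        _ ≤ max B C := le_max_left _ _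
    · -- large x
      rcases le_total 0 x with hx0 | hx0
      · -- x ≥ 1
        have hx1 : 1 ≤ x := by rwa [abs_of_nonneg hx0] at hx
        have hdec : ∀ s : ℝ, 1 ≤ s → ‖g s‖ ≤ C * s ^ (-(k:ℝ) - 2) := by
          intro s hs
          have habs : |s| = s := abs_of_nonneg (le_trans zero_le_one hs)
          have := hC' s (by rwa [habs])
          rwa [habs] at this
        have key := aux_tail_bound hint (le_of_lt hCpos) hdec hx1
        rw [htail x, norm_neg, Real.norm_eq_abs, abs_of_nonneg hx0]
        exact key.trans (le_max_right _ _)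
      · -- x ≤ -1
        have hx1 : 1 ≤ -x := by rwa [abs_of_nonpos hx0] at hx
        have hcomp : H x = ∫ s in Ioi (-x), g (-s) := by
          have h := integral_comp_neg_Iic x (fun s => g (-s))
          simp only [neg_neg] at h
          exact h
        have hφint : Integrable (fun s : ℝ => g (-s)) := by
          have := hint.comp_neg
          simpa using this
        have hdec : ∀ s : ℝ, 1 ≤ s → ‖(fun s : ℝ => g (-s)) s‖ ≤ C * s ^ (-(k:ℝ) - 2) := by
          intro s hs
          have hs0 : (0:ℝ) ≤ s := le_trans zero_le_one hs
          have habs : |(-s)| = s := by rw [abs_neg, abs_of_nonneg hs0]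
          have := hC' (-s) (by rwa [habs])
          rwa [habs] at this
        have key := aux_tail_bound hφint (le_of_lt hCpos) hdec hx1
        rw [hcomp] at *
        rw [Real.norm_eq_abs, abs_of_nonpos hx0]
        exact key.trans (le_max_right _ _)
  -- build the Schwartz map
  refine ⟨⟨H, hsmooth, ?_⟩, ?_⟩
  · intro k n
    match n with
    | 0 =>
      obtain ⟨C, hC⟩ := decay0 k
      exact ⟨C, fun x => by simpa [norm_iteratedFDeriv_zero] using hC x⟩
    | n + 1 =>
      obtain ⟨C, hC⟩ := g.decay' k n
      refine ⟨C, fun x => ?_⟩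
      have heq : ‖iteratedFDeriv ℝ (n + 1) H x‖ = ‖iteratedFDeriv ℝ n (⇑g) x‖ := by
        rw [norm_iteratedFDeriv_eq_norm_iteratedDeriv, norm_iteratedFDeriv_eq_norm_iteratedDeriv,
          iteratedDeriv_succ', hHderiv]
      rw [heq]
      exact hC x
  · funext x
    exact (hderiv x).deriv

end AuxLemmas

/-- Two elements `F, F' ∈ V_f = 𝒮 × ∂⁻¹𝒮` carry the same charges
(`F_c = F'_c` and `F_q = F'_q`) iff their difference lies in `V_b = ∂𝒮 × ∂₀⁻¹𝒮`. -/
theorem stmt_7 (f₀ f₁ f₀' f₁' : ℝ → ℝ)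
    (hf₀ : IsSchwartzFn f₀) (hf₁ : MemDinvS f₁)
    (hf₀' : IsSchwartzFn f₀') (hf₁' : MemDinvS f₁')
    (Fp Fm Fp' Fm' : ℝ)
    (hFp : Tendsto f₁ atTop (𝓝 Fp)) (hFm : Tendsto f₁ atBot (𝓝 Fm))
    (hFp' : Tendsto f₁' atTop (𝓝 Fp')) (hFm' : Tendsto f₁' atBot (𝓝 Fm')) :
    ((∫ x, f₀ x) = (∫ x, f₀' x) ∧ Fp - Fm = Fp' - Fm') ↔
      (MemDS (fun x => f₀ x - f₀' x) ∧ MemDinv0S (fun x => f₁ x - f₁' x)) := by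
  obtain ⟨g₀, hg₀⟩ := hf₀
  obtain ⟨g₀', hg₀'⟩ := hf₀'
  constructor
  · rintro ⟨hc, hq⟩
    constructor
    · -- MemDS
      have hzero : ∫ x, (g₀ - g₀') x = 0 := by
        have h1 : ∀ x, (g₀ - g₀') x = f₀ x - f₀' x := by
          intro x
          rw [SchwartzMap.sub_apply, hg₀, hg₀']
        calc ∫ x, (g₀ - g₀') x = ∫ x, (f₀ x - f₀' x) := by
              congr 1; funext x; exact h1 x
          _ = (∫ x, f₀ x) - ∫ x, f₀' x :=
              integral_sub (hg₀ ▸ g₀.integrable) (hg₀' ▸ g₀'.integrable)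
          _ = 0 := by rw [hc]; ring
      obtain ⟨G, hG⟩ := exists_schwartz_antideriv (g₀ - g₀') hzero
      refine ⟨G, ?_⟩
      rw [hG]
      funext x
      rw [SchwartzMap.sub_apply, hg₀, hg₀']
    · -- MemDinv0S
      obtain ⟨hc₁, g₁, hg₁⟩ := hf₁
      obtain ⟨hc₁', g₁', hg₁'⟩ := hf₁'
      have hd₁ : Differentiable ℝ f₁ := hc₁.differentiable (by simp)
      have hd₁' : Differentiable ℝ f₁' := hc₁'.differentiable (by simp)
      have hderiv : deriv (fun x => f₁ x - f₁' x) = fun x => deriv f₁ x - deriv f₁' x := by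
        funext x
        exact deriv_sub (hd₁ x) (hd₁' x)
      refine ⟨⟨hc₁.sub hc₁', g₁ - g₁', ?_⟩, Fp - Fp', hFp.sub hFp', ?_⟩
      · rw [hderiv]
        funext x
        rw [SchwartzMap.sub_apply, hg₁, hg₁']
      · have : Fp - Fp' = Fm - Fm' := by linarith
        rw [this]
        exact hFm.sub hFm'
  · rintro ⟨⟨G, hG⟩, ⟨-, L, hT, hB⟩⟩
    constructor
    · have h1 : Integrable f₀ := hg₀ ▸ g₀.integrable
      have h2 : Integrable f₀' := hg₀' ▸ g₀'.integrable
      have h3 : ∫ x, (f₀ x - f₀' x) = 0 := by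
        rw [← hG]
        exact integral_deriv_schwartz_eq_zero G
      rw [integral_sub h1 h2] at h3
      linarith
    · have e1 : Fp - Fp' = L := tendsto_nhds_unique (hFp.sub hFp') hT
      have e2 : Fm - Fm' = L := tendsto_nhds_unique (hFm.sub hFm') hB
      linarith
end

section
/- For every real-valued Schwartz function f ∈ 𝒮(ℝ), the function p ↦ ‖𝓕f(p)‖²/|p| is integrable on ℝ if and only if ∫_ℝ f(x) dx = 0. (Infrared regularity: the generalized quadratic form q defining the Fock state is finite exactly on the constrained test functions, and diverges for nonzero total charge.) -/
/-!
The Fourier transform `g` of `f` is again a Schwartz function, and `g 0 = ∫ f`. If `∫ f ≠ 0`,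
then `‖g p‖²` stays away from `0` near `p = 0`, so the integrand dominates a multiple of `1/|p|`,
which is not integrable at `0`. If `∫ f = 0`, the mean value theorem gives `‖g p‖ ≤ C |p|`, so the
integrand is bounded by the integrable function `C ‖g‖`.
-/

open MeasureTheory Filter Topology Asymptotics SchwartzMap
open scoped FourierTransform

section InverseWeight

variable {E : Type*} [NormedAddCommGroup E]

theorem not_integrable_norm_sq_div_abs {g : ℝ → E} (hg : ContinuousAt g 0) (hg0 : g 0 ≠ 0) :
    ¬ Integrable (fun p : ℝ => ‖g p‖ ^ 2 / |p|) := by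
  intro hint
  have hone : (fun _ : ℝ => (1 : ℝ)) =O[𝓝[≠] 0] fun p => ‖g p‖ ^ 2 := by
    have hlim : Tendsto (fun p => ‖g p‖ ^ 2) (𝓝[≠] 0) (𝓝 (‖g 0‖ ^ 2)) :=
      (hg.norm.pow 2).mono_left nhdsWithin_le_nhds
    refine (isBigO_const_left_iff_pos_le_norm one_ne_zero).2 ⟨‖g 0‖ ^ 2 / 2, by positivity, ?_⟩
    filter_upwards [hlim.eventually_const_lt (half_lt_self (by positivity))] with p hp
    exact hp.le.trans (le_abs_self _)
  have hinv : (fun p : ℝ => (p - 0)⁻¹) =O[𝓝[≠] 0] fun p => |p|⁻¹ :=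
    isBigO_of_le _ fun p => by simp
  refine not_intervalIntegrable_of_sub_inv_isBigO_punctured (a := -1) (b := 1) (c := 0) ?_
    (by norm_num) (by simp) hint.intervalIntegrable
  simpa [div_eq_mul_inv] using hone.mul hinv

theorem integrable_norm_sq_div_abs_of_norm_le {g : ℝ → E} (hg : Integrable g) {C : ℝ}
    (hC : ∀ p, ‖g p‖ ≤ C * |p|) : Integrable (fun p : ℝ => ‖g p‖ ^ 2 / |p|) := by
  refine (hg.norm.const_mul C).mono'
    ((hg.aestronglyMeasurable.norm.pow 2).div₀ continuous_abs.aestronglyMeasurable)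
    (Eventually.of_forall fun p => ?_)
  rw [Real.norm_of_nonneg (by positivity)]
  rcases eq_or_ne p 0 with rfl | hp
  · simp [norm_le_zero_iff.1 (by simpa using hC 0)]
  · calc ‖g p‖ ^ 2 / |p| = ‖g p‖ * (‖g p‖ / |p|) := by ring
      _ ≤ ‖g p‖ * C := by gcongr; rw [div_le_iff₀ (abs_pos.2 hp)]; exact hC p
      _ = C * ‖g p‖ := mul_comm _ _

end InverseWeight

theorem SchwartzMap.exists_norm_le_mul_abs_of_map_zero {F : Type*} [NormedAddCommGroup F]
    [NormedSpace ℝ F] (g : 𝓢(ℝ, F)) (hg : g 0 = 0) : ∃ C, ∀ p, ‖g p‖ ≤ C * |p| := by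
  refine ⟨SchwartzMap.seminorm ℝ 0 0 (derivCLM ℝ F g), fun p => ?_⟩
  simpa [hg, Real.norm_eq_abs] using Convex.norm_image_sub_le_of_norm_deriv_le
    (fun x _ => g.differentiableAt) (fun x _ => (derivCLM ℝ F g).norm_le_seminorm ℝ x)
    convex_univ (Set.mem_univ 0) (Set.mem_univ p)

theorem Real.fourier_apply_zero {V E : Type*} [NormedAddCommGroup V] [InnerProductSpace ℝ V]
    [MeasurableSpace V] [BorelSpace V] [FiniteDimensional ℝ V] [NormedAddCommGroup E]
    [NormedSpace ℂ E] (f : V → E) : 𝓕 f 0 = ∫ v, f v := by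
  simp [Real.fourier_eq]

/-- (Infrared regularity.)  For every real-valued Schwartz function
`f ∈ 𝒮(ℝ)`, the function `p ↦ ‖𝓕f(p)‖²/|p|` is integrable on ℝ iff `∫ f = 0`. -/
theorem stmt_8 (f : SchwartzMap ℝ ℝ) :
    Integrable (fun p : ℝ => ‖𝓕 (fun x : ℝ => (f x : ℂ)) p‖ ^ 2 / |p|) ↔
      (∫ x, f x) = 0 := by
  set g : 𝓢(ℝ, ℂ) := 𝓕 (f.postcompCLM (𝕜 := ℝ) Complex.ofRealCLM)
  have hg : (g : ℝ → ℂ) = 𝓕 (fun x : ℝ => (f x : ℂ)) := rfl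
  have hg0 : g 0 = ((∫ x, f x : ℝ) : ℂ) := by
    rw [hg, Real.fourier_apply_zero, integral_complex_ofReal]
  rw [← hg]
  constructor
  · intro hint
    by_contra hne
    exact not_integrable_norm_sq_div_abs g.continuous.continuousAt
      (by rw [hg0]; exact_mod_cast hne) hint
  · intro hzero
    obtain ⟨C, hC⟩ :=
      g.exists_norm_le_mul_abs_of_map_zero (by rw [hg0, hzero, Complex.ofReal_zero])
    exact integrable_norm_sq_div_abs_of_norm_le g.integrable hC
end

section
/- For F = (f₀,f₁) and G = (g₀,g₁) in V_a, define T F(p) := ω(p)^{−1/2}·𝓕f₀(p) + 𝐢·ω(p)^{1/2}·𝓕f₁(p) (for p ≠ 0). Then the function p ↦ conj(T F(p))·T G(p) is integrable on ℝ, and the imaginary part of ∫_ℝ conj(T F(p))·T G(p) dp equals σ(F,G) = ∫_ℝ (f₀g₁ − f₁g₀) dx. (The symplectic form is the imaginary part of the one-particle Hilbert space inner product defining the Fock representation.) -/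
open MeasureTheory Filter Topology Real
open scoped FourierTransform ComplexConjugate

/-- The one-particle map `T F(p) = ω(p)^{-1/2}·𝓕f₀(p) + i·ω(p)^{1/2}·𝓕f₁(p)`,
with `ω(p) = 2π|p|`. -/
noncomputable def oneParticle (f₀ f₁ : ℝ → ℝ) (p : ℝ) : ℂ :=
  (((2 * π * |p|) ^ (-(1/2 : ℝ)) : ℝ) : ℂ) * 𝓕 (fun x : ℝ => (f₀ x : ℂ)) p
  + Complex.I * (((2 * π * |p|) ^ ((1/2 : ℝ)) : ℝ) : ℂ) * 𝓕 (fun x : ℝ => (f₁ x : ℂ)) p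

/-!
For `p ≠ 0` the product `conj (T F p) * T G p` splits as
`ω⁻¹ conj (𝓕f₀) 𝓕g₀ + ω conj (𝓕f₁) 𝓕g₁ + i (conj (𝓕f₀) 𝓕g₁ - conj (𝓕f₁) 𝓕g₀)`.
For real `f` one has `conj (𝓕f p) = 𝓕f (-p)`, so the two weighted terms are invariant under
`p ↦ -p` followed by conjugation and have real integrals, while Plancherel turns the cross term
into `i ∫ (f₀ g₁ - f₁ g₀)`. Integrability comes from `𝓕(h') p = 2πip 𝓕h p`: the weights `ω^{±1}`
are absorbed by trading a Fourier transform for that of a derivative.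
-/

open Complex SchwartzMap

lemma conj_fourier_ofReal {V : Type*} [NormedAddCommGroup V] [InnerProductSpace ℝ V]
    [MeasurableSpace V] [BorelSpace V] [FiniteDimensional ℝ V] (f : V → ℝ) (p : V) :
    conj (𝓕 (fun x => (f x : ℂ)) p) = 𝓕 (fun x => (f x : ℂ)) (-p) := by
  rw [Real.fourier_eq', Real.fourier_eq', ← integral_conj]
  congr 1 with x
  simp only [smul_eq_mul, map_mul, conj_ofReal, ← exp_conj, conj_I, inner_neg_right]
  push_cast
  ring_nf

lemma im_integral_eq_zero_of_conj_eq_comp_neg {g : ℝ → ℂ} (hg : ∀ p, conj (g p) = g (-p)) :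
    (∫ p, g p).im = 0 := by
  refine conj_eq_iff_im.mp ?_
  rw [← integral_conj, funext hg, integral_neg_eq_self]

lemma im_integral_mul_conj_fourier_mul_fourier_eq_zero {w : ℝ → ℝ} (hw : ∀ p, w (-p) = w p)
    (f g : ℝ → ℝ) :
    (∫ p, (w p : ℂ) * (conj (𝓕 (fun x => (f x : ℂ)) p) * 𝓕 (fun x => (g x : ℂ)) p)).im = 0 :=
  im_integral_eq_zero_of_conj_eq_comp_neg fun p => by
    simp only [map_mul, conj_ofReal, conj_fourier_ofReal, neg_neg, hw]

lemma SchwartzMap.integrable_conj_mul {E 𝕜 : Type*} [NormedAddCommGroup E] [NormedSpace ℝ E]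
    [MeasurableSpace E] [BorelSpace E] [SecondCountableTopology E] {μ : Measure E}
    [μ.HasTemperateGrowth] [RCLike 𝕜] (U V : 𝓢(E, 𝕜)) :
    Integrable (fun x => conj (U x) * V x) μ :=
  V.integrable.bdd_mul U.continuous.star.aestronglyMeasurable
    (.of_forall fun x => (RCLike.norm_conj _).trans_le (U.norm_le_seminorm ℝ x))

lemma SchwartzMap.coe_postcompCLM_ofRealCLM (f : 𝓢(ℝ, ℝ)) :
    ⇑(f.postcompCLM ofRealCLM) = fun x => (f x : ℂ) :=
  rfl

lemma integral_conj_fourier_mul_fourier_ofReal (f g : 𝓢(ℝ, ℝ)) :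
    ∫ p, conj (𝓕 (fun x => (f x : ℂ)) p) * 𝓕 (fun x => (g x : ℂ)) p =
      ((∫ x, f x * g x : ℝ) : ℂ) := by
  have := integral_inner_fourier_fourier (f.postcompCLM ofRealCLM) (g.postcompCLM ofRealCLM)
  simp only [fourier_coe, coe_postcompCLM_ofRealCLM, RCLike.inner_apply', conj_ofReal,
    ← ofReal_mul] at this
  exact this.trans integral_ofReal

lemma fourier_deriv_ofReal (f : 𝓢(ℝ, ℝ)) (p : ℝ) :
    𝓕 (fun x => ((deriv (⇑f) x : ℝ) : ℂ)) p = 2 * π * I * p * 𝓕 (fun x => (f x : ℂ)) p := by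
  set F := f.postcompCLM ofRealCLM
  have hF : deriv F = fun x => ((deriv (⇑f) x : ℝ) : ℂ) := funext fun x =>
    ((f.hasDerivAt x).ofReal_comp).deriv
  have := Real.fourier_deriv F.integrable F.differentiable (derivCLM ℝ ℂ F).integrable
  rw [hF] at this
  exact congrFun this p

lemma norm_fourier_deriv_ofReal (f : 𝓢(ℝ, ℝ)) (p : ℝ) :
    ‖𝓕 (fun x => ((deriv (⇑f) x : ℝ) : ℂ)) p‖ = 2 * π * |p| * ‖𝓕 (fun x => (f x : ℂ)) p‖ := by
  rw [fourier_deriv_ofReal]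
  simp [abs_of_pos pi_pos]

lemma integrable_conj_fourier_mul_fourier (f g : 𝓢(ℝ, ℝ)) :
    Integrable (fun p => conj (𝓕 (fun x => (f x : ℂ)) p) * 𝓕 (fun x => (g x : ℂ)) p) := by
  simpa only [fourier_coe, coe_postcompCLM_ofRealCLM] using
    (𝓕 (f.postcompCLM ofRealCLM)).integrable_conj_mul (𝓕 (g.postcompCLM ofRealCLM))

lemma continuous_fourier_ofReal (f : 𝓢(ℝ, ℝ)) : Continuous (𝓕 (fun x => (f x : ℂ))) :=
  (𝓕 (f.postcompCLM ofRealCLM)).continuous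

lemma integrable_mul_conj_fourier_mul_fourier (f g : 𝓢(ℝ, ℝ)) :
    Integrable (fun p => ((2 * π * |p| : ℝ) : ℂ) *
      (conj (𝓕 (fun x => (f x : ℂ)) p) * 𝓕 (fun x => (g x : ℂ)) p)) := by
  have := continuous_fourier_ofReal f
  have := continuous_fourier_ofReal g
  refine (integrable_conj_fourier_mul_fourier f (derivCLM ℝ ℝ g)).congr' (by fun_prop) ?_
  refine .of_forall fun p => ?_
  simp only [norm_mul, RCLike.norm_conj, norm_real, derivCLM_apply, norm_fourier_deriv_ofReal,
    Real.norm_of_nonneg (by positivity : 0 ≤ 2 * π * |p|)]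
  ring

lemma integrable_inv_mul_conj_fourier_deriv_mul_fourier_deriv (f g : 𝓢(ℝ, ℝ)) :
    Integrable (fun p => (((2 * π * |p|)⁻¹ : ℝ) : ℂ) *
      (conj (𝓕 (fun x => ((deriv (⇑f) x : ℝ) : ℂ)) p) *
        𝓕 (fun x => ((deriv (⇑g) x : ℝ) : ℂ)) p)) := by
  have := continuous_fourier_ofReal (derivCLM ℝ ℝ f)
  have := continuous_fourier_ofReal (derivCLM ℝ ℝ g)
  refine (integrable_conj_fourier_mul_fourier (derivCLM ℝ ℝ f) g).congr' (by fun_prop) ?_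
  filter_upwards [volume.ae_ne 0] with p hp
  simp only [norm_mul, RCLike.norm_conj, norm_real, derivCLM_apply, norm_fourier_deriv_ofReal g,
    Real.norm_of_nonneg (by positivity : 0 ≤ (2 * π * |p|)⁻¹)]
  rw [mul_left_comm _ (2 * π * |p|), inv_mul_cancel_left₀ (by positivity)]

lemma conj_oneParticle_mul_oneParticle (f₀ f₁ g₀ g₁ : ℝ → ℝ) {p : ℝ} (hp : p ≠ 0) :
    conj (oneParticle f₀ f₁ p) * oneParticle g₀ g₁ p =
      (((2 * π * |p|)⁻¹ : ℝ) : ℂ) *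
          (conj (𝓕 (fun x => (f₀ x : ℂ)) p) * 𝓕 (fun x => (g₀ x : ℂ)) p) +
        ((2 * π * |p| : ℝ) : ℂ) *
          (conj (𝓕 (fun x => (f₁ x : ℂ)) p) * 𝓕 (fun x => (g₁ x : ℂ)) p) +
        I * (conj (𝓕 (fun x => (f₀ x : ℂ)) p) * 𝓕 (fun x => (g₁ x : ℂ)) p -
          conj (𝓕 (fun x => (f₁ x : ℂ)) p) * 𝓕 (fun x => (g₀ x : ℂ)) p) := by
  have ht : 0 < 2 * π * |p| := by positivity
  unfold oneParticle
  generalize 2 * π * |p| = t at ht ⊢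
  have hab : ((t ^ (-(1/2 : ℝ)) : ℝ) : ℂ) * ((t ^ (1/2 : ℝ) : ℝ) : ℂ) = 1 := by
    rw [← ofReal_mul, ← rpow_add ht]; norm_num
  have hbb : ((t ^ (1/2 : ℝ) : ℝ) : ℂ) * ((t ^ (1/2 : ℝ) : ℝ) : ℂ) = t := by
    rw [← ofReal_mul, ← rpow_add ht]; norm_num
  have haa : ((t ^ (-(1/2 : ℝ)) : ℝ) : ℂ) * ((t ^ (-(1/2 : ℝ)) : ℝ) : ℂ) = ((t⁻¹ : ℝ) : ℂ) := by
    rw [← ofReal_mul, ← rpow_add ht]; norm_num [rpow_neg_one]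
  simp only [map_add, map_mul, conj_ofReal, conj_I]
  set A₀ := 𝓕 (fun x => (f₀ x : ℂ)) p
  set A₁ := 𝓕 (fun x => (f₁ x : ℂ)) p
  set B₀ := 𝓕 (fun x => (g₀ x : ℂ)) p
  set B₁ := 𝓕 (fun x => (g₁ x : ℂ)) p
  linear_combination conj A₀ * B₀ * haa + I * (conj A₀ * B₁ - conj A₁ * B₀) * hab +
    conj A₁ * B₁ * hbb - conj A₁ * B₁ * ((t ^ (1/2 : ℝ) : ℝ) : ℂ) ^ 2 * I_sq

/-- For `F = (f₀,f₁), G = (g₀,g₁) ∈ V_a = ∂𝒮 × 𝒮`, the function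
`p ↦ conj(T F(p))·T G(p)` is integrable on ℝ and the imaginary part of its integral
equals `σ(F,G) = ∫ (f₀ g₁ − f₁ g₀)`: the symplectic form is the imaginary part of the
one-particle inner product defining the Fock representation. -/
theorem stmt_9 (h₀ f₁ k₀ g₁ : SchwartzMap ℝ ℝ) :
    Integrable (fun p : ℝ =>
      conj (oneParticle (deriv ⇑h₀) ⇑f₁ p) * oneParticle (deriv ⇑k₀) ⇑g₁ p) ∧
    (∫ p : ℝ,
      conj (oneParticle (deriv ⇑h₀) ⇑f₁ p) * oneParticle (deriv ⇑k₀) ⇑g₁ p).im =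
      ∫ x, (deriv h₀ x * g₁ x - f₁ x * deriv k₀ x) := by
  set h₀' := derivCLM ℝ ℝ h₀
  set k₀' := derivCLM ℝ ℝ k₀
  have hT₀ := integrable_inv_mul_conj_fourier_deriv_mul_fourier_deriv h₀ k₀
  rw [show deriv ⇑h₀ = ⇑h₀' from rfl, show deriv ⇑k₀ = ⇑k₀' from rfl] at hT₀ ⊢
  have hT₁ := integrable_mul_conj_fourier_mul_fourier f₁ g₁
  have hc₀₁ := integrable_conj_fourier_mul_fourier h₀' g₁
  have hc₁₀ := integrable_conj_fourier_mul_fourier f₁ k₀'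
  have hae := (volume.ae_ne (0 : ℝ)).mono fun p hp =>
    conj_oneParticle_mul_oneParticle h₀' f₁ k₀' g₁ hp
  refine ⟨((hT₀.add hT₁).add ((hc₀₁.sub hc₁₀).const_mul I)).congr (hae.mono fun _ => Eq.symm), ?_⟩
  have him₀ := im_integral_mul_conj_fourier_mul_fourier_eq_zero
    (w := fun p => (2 * π * |p|)⁻¹) (fun p => by rw [abs_neg]) h₀' k₀'
  have him₁ := im_integral_mul_conj_fourier_mul_fourier_eq_zero
    (w := fun p => 2 * π * |p|) (fun p => by rw [abs_neg]) f₁ g₁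
  rw [integral_congr_ae hae, integral_add, integral_add hT₀ hT₁, add_im, add_im, him₀, him₁,
    integral_const_mul, integral_sub hc₀₁ hc₁₀, integral_conj_fourier_mul_fourier_ofReal,
    integral_conj_fourier_mul_fourier_ofReal, integral_sub
      (by simpa using h₀'.integrable_conj_mul g₁) (by simpa using f₁.integrable_conj_mul k₀')]
  · simp
  · exact hT₀.add hT₁
  · exact (hc₀₁.sub hc₁₀).const_mul I
end

section
/- Let F = (f₀,f₁) ∈ V_a with f₀ = h′ for h ∈ 𝒮(ℝ), and set θ₊ := (f₁ + h)/2 and θ₋ := (f₁ − h)/2 (so θ₊, θ₋ ∈ 𝒮(ℝ)). Then all four integrals below are finite and ∫_ℝ ( ‖𝓕f₀(p)‖²/ω(p) + ω(p)·‖𝓕f₁(p)‖² ) dp = 2∫_ℝ ω(p)·‖𝓕θ₊(p)‖² dp + 2∫_ℝ ω(p)·‖𝓕θ₋(p)‖² dp. (The one-particle Fock norm of an observable equals twice the sum of the chiral one-particle norms of its left/right mover components: ‖T_a F‖² = 2‖T_{a+}θ₊‖² + 2‖T_{a−}θ₋‖².) -/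
open MeasureTheory Filter Topology Real
open scoped FourierTransform
open SchwartzMap

/-!
Since `𝓕 (h') p = 2πip • 𝓕 h p`, the term `‖𝓕 f₀ p‖² / ω(p)` equals `ω(p) ‖𝓕 h p‖²`, also at
`p = 0`, where the division by zero gives `0` on both sides. The identity is then the
parallelogram law for `𝓕 f₁ p` and `𝓕 h p`, weighted by `ω(p)` and integrated. Every integrand is
`|p|` times the squared norm of a Schwartz function, hence integrable.
-/

theorem norm_sq_add_norm_sq_eq_half_add_half_sub (𝕜 : Type*) {E : Type*} [RCLike 𝕜]
    [SeminormedAddCommGroup E] [InnerProductSpace 𝕜 E] (x y : E) :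
    ‖x‖ ^ 2 + ‖y‖ ^ 2 = 2 * ‖(2 : 𝕜)⁻¹ • (x + y)‖ ^ 2 + 2 * ‖(2 : 𝕜)⁻¹ • (x - y)‖ ^ 2 := by
  have := parallelogram_law_with_norm 𝕜 x y
  simp only [norm_smul, norm_inv, RCLike.norm_ofNat, mul_pow]
  linarith

namespace SchwartzMap

noncomputable def ofRealCLM {V : Type*} [NormedAddCommGroup V] [NormedSpace ℝ V] :
    𝓢(V, ℝ) →L[ℝ] 𝓢(V, ℂ) :=
  postcompCLM Complex.ofRealCLM

@[simp]
theorem ofRealCLM_apply {V : Type*} [NormedAddCommGroup V] [NormedSpace ℝ V] (f : 𝓢(V, ℝ))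
    (x : V) : ofRealCLM f x = f x :=
  rfl

theorem integrable_mul_abs_mul_norm_sq {E : Type*} [NormedAddCommGroup E] [NormedSpace ℝ E]
    (f : 𝓢(ℝ, E)) (c : ℝ) : Integrable fun x => c * |x| * ‖f x‖ ^ 2 := by
  have hbound : ∀ x, ‖c * ‖f x‖‖ ≤ |c| * SchwartzMap.seminorm ℝ 0 0 f := fun x => by
    rw [norm_mul, norm_norm, Real.norm_eq_abs]
    gcongr
    exact f.norm_le_seminorm ℝ x
  refine ((f.integrable_pow_mul volume 1).bdd_mul (by fun_prop) (.of_forall hbound)).congr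
    (.of_forall fun x => ?_)
  simp only [pow_one, Real.norm_eq_abs]
  ring

section Fourier

variable {E : Type*} [NormedAddCommGroup E] [NormedSpace ℂ E]

theorem norm_fourier_deriv (f : 𝓢(ℝ, E)) (p : ℝ) :
    ‖𝓕 (deriv ⇑f) p‖ = 2 * π * |p| * ‖𝓕 ⇑f p‖ := by
  rw [Real.fourier_deriv f.integrable f.differentiable (derivCLM ℝ E f).integrable, norm_smul]
  simp [abs_of_pos pi_pos]

theorem norm_fourier_deriv_sq_div (f : 𝓢(ℝ, E)) (p : ℝ) :
    ‖𝓕 (deriv ⇑f) p‖ ^ 2 / (2 * π * |p|) = 2 * π * |p| * ‖𝓕 ⇑f p‖ ^ 2 := by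
  rw [norm_fourier_deriv]
  rcases eq_or_ne p 0 with rfl | hp
  · simp
  · field_simp

theorem integrable_mul_norm_sq_fourier (f : 𝓢(ℝ, E)) :
    Integrable fun p => 2 * π * |p| * ‖𝓕 ⇑f p‖ ^ 2 :=
  (𝓕 f).integrable_mul_abs_mul_norm_sq (2 * π)

theorem integrable_norm_sq_fourier_deriv_div (f : 𝓢(ℝ, E)) :
    Integrable fun p => ‖𝓕 (deriv ⇑f) p‖ ^ 2 / (2 * π * |p|) := by
  simp_rw [norm_fourier_deriv_sq_div]
  exact f.integrable_mul_norm_sq_fourier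

end Fourier

theorem integral_norm_sq_fourier_deriv_div_add_eq {E : Type*} [NormedAddCommGroup E]
    [InnerProductSpace ℂ E] (F H : 𝓢(ℝ, E)) :
    ∫ p, (‖𝓕 (deriv ⇑H) p‖ ^ 2 / (2 * π * |p|) + 2 * π * |p| * ‖𝓕 ⇑F p‖ ^ 2) =
      2 * (∫ p, 2 * π * |p| * ‖𝓕 ⇑((2 : ℂ)⁻¹ • (F + H)) p‖ ^ 2) +
      2 * ∫ p, 2 * π * |p| * ‖𝓕 ⇑((2 : ℂ)⁻¹ • (F - H)) p‖ ^ 2 := by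
  rw [← integral_const_mul, ← integral_const_mul,
    ← integral_add (integrable_mul_norm_sq_fourier _ |>.const_mul 2)
      (integrable_mul_norm_sq_fourier _ |>.const_mul 2)]
  refine integral_congr_ae (.of_forall fun p => ?_)
  have hpar := norm_sq_add_norm_sq_eq_half_add_half_sub ℂ (𝓕 ⇑F p) (𝓕 ⇑H p)
  simp only [norm_fourier_deriv_sq_div, ← fourier_coe, ← fourierTransformCLM_apply ℂ, map_smul,
    map_add, map_sub, smul_apply, add_apply, sub_apply] at hpar ⊢
  linear_combination (2 * π * |p|) * hpar

end SchwartzMap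

/-- Let `F = (f₀,f₁) ∈ V_a` with `f₀ = h′`, `h ∈ 𝒮(ℝ)`, and set
`θ₊ = (f₁ + h)/2`, `θ₋ = (f₁ − h)/2`.  Then all four integrals below are finite and
`∫ (‖𝓕f₀‖²/ω + ω‖𝓕f₁‖²) = 2∫ ω‖𝓕θ₊‖² + 2∫ ω‖𝓕θ₋‖²` with `ω(p) = 2π|p|`:
the one-particle Fock norm of an observable equals twice the sum of the chiral
one-particle norms of its left/right mover components. -/
theorem stmt_12 (h f₁ : SchwartzMap ℝ ℝ) :
    Integrable (fun p : ℝ =>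
      ‖𝓕 (fun x : ℝ => ((deriv (⇑h) x : ℝ) : ℂ)) p‖ ^ 2 / (2 * π * |p|)) ∧
    Integrable (fun p : ℝ =>
      (2 * π * |p|) * ‖𝓕 (fun x : ℝ => (f₁ x : ℂ)) p‖ ^ 2) ∧
    Integrable (fun p : ℝ =>
      (2 * π * |p|) * ‖𝓕 (fun x : ℝ => (((f₁ x + h x) / 2 : ℝ) : ℂ)) p‖ ^ 2) ∧
    Integrable (fun p : ℝ =>
      (2 * π * |p|) * ‖𝓕 (fun x : ℝ => (((f₁ x - h x) / 2 : ℝ) : ℂ)) p‖ ^ 2) ∧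
    (∫ p : ℝ, (‖𝓕 (fun x : ℝ => ((deriv (⇑h) x : ℝ) : ℂ)) p‖ ^ 2 / (2 * π * |p|)
        + (2 * π * |p|) * ‖𝓕 (fun x : ℝ => (f₁ x : ℂ)) p‖ ^ 2)) =
      2 * (∫ p : ℝ, (2 * π * |p|) * ‖𝓕 (fun x : ℝ => (((f₁ x + h x) / 2 : ℝ) : ℂ)) p‖ ^ 2)
      + 2 * (∫ p : ℝ, (2 * π * |p|) * ‖𝓕 (fun x : ℝ => (((f₁ x - h x) / 2 : ℝ) : ℂ)) p‖ ^ 2) := by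
  have hderiv : (fun x => ((deriv (⇑h) x : ℝ) : ℂ)) = deriv ⇑(ofRealCLM h) :=
    funext fun x => h.differentiableAt.hasDerivAt.ofReal_comp.deriv.symm
  have hplus : (fun x => (((f₁ x + h x) / 2 : ℝ) : ℂ)) =
      ⇑((2 : ℂ)⁻¹ • (ofRealCLM f₁ + ofRealCLM h)) := by
    ext x
    simp only [smul_apply, add_apply, ofRealCLM_apply, smul_eq_mul]
    push_cast
    ring
  have hminus : (fun x => (((f₁ x - h x) / 2 : ℝ) : ℂ)) =
      ⇑((2 : ℂ)⁻¹ • (ofRealCLM f₁ - ofRealCLM h)) := by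
    ext x
    simp only [smul_apply, sub_apply, ofRealCLM_apply, smul_eq_mul]
    push_cast
    ring
  have hf₁ : (fun x => (f₁ x : ℂ)) = ⇑(ofRealCLM f₁) :=
    funext fun x => (ofRealCLM_apply f₁ x).symm
  rw [hderiv, hf₁, hplus, hminus]
  exact ⟨integrable_norm_sq_fourier_deriv_div _, integrable_mul_norm_sq_fourier _,
    integrable_mul_norm_sq_fourier _, integrable_mul_norm_sq_fourier _,
    integral_norm_sq_fourier_deriv_div_add_eq _ _⟩
end

section
/- (Solitonic action at spacelike distance.) Let I = (a,b) and I₁ = (a₁,b₁) be bounded open intervals. Let F = (f₀,f₁) ∈ V_e be localized in I (f₀ = h′ with h ∈ 𝒮 and supp f₀ ⊆ I; f₁ smooth with f₁′ ∈ 𝒮 and supp f₁′ ⊆ I), with F₊ := lim_{x→+∞} f₁(x), F₋ := lim_{x→−∞} f₁(x). Let G = (g₀,g₁) ∈ V_c be localized in I₁ (g₀ ∈ 𝒮 with supp g₀ ⊆ I₁; g₁ smooth with g₁′ ∈ 𝒮, supp g₁′ ⊆ I₁ and lim_{x→+∞} g₁(x) = lim_{x→−∞} g₁(x)), with G_c :=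 ∫_ℝ g₀ dx. If b ≤ a₁ (I₁ lies to the right of I) then σ(F,G) = −F₊·G_c, while if b₁ ≤ a (I₁ lies to the left of I) then σ(F,G) = −F₋·G_c. (Hence the automorphism implemented by W(F) acts on the net C at spacelike distance to the right/left of I by the phases e^{−iF₊G_c}/e^{−iF₋G_c}: it is an N-solitonic automorphism.) -/
open MeasureTheory Filter Topology

lemma aux_const_right (u : ℝ → ℝ) (hd : Differentiable ℝ u) (b : ℝ)
    (h0 : ∀ x, b ≤ x → deriv u x = 0) (L : ℝ) (hL : Tendsto u atTop (𝓝 L)) :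
    ∀ x, b ≤ x → u x = L := by
  intro x hx
  have key : ∀ y, x ≤ y → u y = u x := by
    intro y hy
    have : ∫ t in x..y, deriv u t = u y - u x := by
      apply intervalIntegral.integral_deriv_eq_sub (fun t _ => hd t)
      have : Set.EqOn (deriv u) 0 (Set.uIcc x y) := by
        intro t ht
        rw [Set.uIcc_of_le hy] at ht
        exact h0 t (le_trans hx ht.1)
      exact (intervalIntegrable_const : IntervalIntegrable (fun _ => (0:ℝ)) volume _ _).congr
        (fun t ht => (this (Set.uIoc_subset_uIcc ht)).symm)
    have hz : (∫ t in x..y, deriv u t) = 0 := by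
      rw [intervalIntegral.integral_congr (g := 0)]
      · simp
      · intro t ht
        rw [Set.uIcc_of_le hy] at ht
        exact h0 t (le_trans hx ht.1)
    have := hz ▸ this
    linarith
  have : Tendsto u atTop (𝓝 (u x)) := by
    apply Tendsto.congr' _ tendsto_const_nhds
    filter_upwards [eventually_ge_atTop x] with y hy
    exact (key y hy).symm
  exact tendsto_nhds_unique this hL

lemma aux_const_left (u : ℝ → ℝ) (hd : Differentiable ℝ u) (a : ℝ)
    (h0 : ∀ x, x ≤ a → deriv u x = 0) (L : ℝ) (hL : Tendsto u atBot (𝓝 L)) :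
    ∀ x, x ≤ a → u x = L := by
  intro x hx
  have key : ∀ y, y ≤ x → u y = u x := by
    intro y hy
    have : ∫ t in y..x, deriv u t = u x - u y := by
      apply intervalIntegral.integral_deriv_eq_sub (fun t _ => hd t)
      have : Set.EqOn (deriv u) 0 (Set.uIcc y x) := by
        intro t ht
        rw [Set.uIcc_of_le hy] at ht
        exact h0 t (le_trans ht.2 hx)
      exact (intervalIntegrable_const : IntervalIntegrable (fun _ => (0:ℝ)) volume _ _).congr
        (fun t ht => (this (Set.uIoc_subset_uIcc ht)).symm)
    have hz : (∫ t in y..x, deriv u t) = 0 := by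
      rw [intervalIntegral.integral_congr (g := 0)]
      · simp
      · intro t ht
        rw [Set.uIcc_of_le hy] at ht
        exact h0 t (le_trans ht.2 hx)
    have := hz ▸ this
    linarith
  have : Tendsto u atBot (𝓝 (u x)) := by
    apply Tendsto.congr' _ tendsto_const_nhds
    filter_upwards [eventually_le_atBot x] with y hy
    exact (key y hy).symm
  exact tendsto_nhds_unique this hL

/-- a Schwartz function whose derivative is supported in `Ioo a b` has zero integral of deriv. -/
lemma aux_integral_deriv_zero (h : SchwartzMap ℝ ℝ) (a b : ℝ)
    (hloc : tsupport (deriv ⇑h) ⊆ Set.Ioo a b) :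
    (∫ x, deriv (⇑h) x) = 0 := by
  have hdz : ∀ x, x ∉ Set.Ioo a b → deriv (⇑h) x = 0 := fun x hx =>
    image_eq_zero_of_notMem_tsupport (fun hmem => hx (hloc hmem))
  have hzero : Tendsto (⇑h) (cocompact ℝ) (𝓝 0) := zero_at_infty h
  rw [cocompact_eq_atBot_atTop] at hzero
  have htop : Tendsto (⇑h) atTop (𝓝 0) := hzero.mono_left le_sup_right
  have hbot : Tendsto (⇑h) atBot (𝓝 0) := hzero.mono_left le_sup_left
  have hb : ∀ x, b ≤ x → h x = 0 :=
    aux_const_right _ h.differentiable b (fun x hx => hdz x (fun hm => absurd hm.2 (not_lt.2 hx))) 0 htop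
  have ha : ∀ x, x ≤ a → h x = 0 :=
    aux_const_left _ h.differentiable a (fun x hx => hdz x (fun hm => absurd hm.1 (not_lt.2 hx))) 0 hbot
  rcases le_or_gt a b with hab | hab
  · have : (∫ x, deriv (⇑h) x) = ∫ x in Set.Ioc a b, deriv (⇑h) x := by
      rw [setIntegral_eq_integral_of_forall_compl_eq_zero]
      intro x hx
      apply hdz
      intro hm
      exact hx ⟨hm.1, le_of_lt hm.2⟩
    rw [this, ← intervalIntegral.integral_of_le hab,
      intervalIntegral.integral_deriv_eq_sub (fun t _ => h.differentiableAt)]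
    · rw [hb b le_rfl, ha a le_rfl]; ring
    · exact (Continuous.intervalIntegrable (by exact (SchwartzMap.derivCLM ℝ ℝ h).continuous : Continuous (deriv ⇑h)) _ _)
  · have : ∀ x, deriv (⇑h) x = 0 := fun x => hdz x (fun hm => absurd (hm.1.trans hm.2) (lt_asymm hab))
    simp [funext this]

/-- (Solitonic action at spacelike distance.)  Let `F ∈ V_e` be
localized in `I = (a,b)` and `G ∈ V_c` be localized in `I₁ = (a₁,b₁)`, with
`F₊ = lim_{+∞} f₁`, `F₋ = lim_{−∞} f₁`, `G_c = ∫ g₀`.  If `b ≤ a₁` (`I₁` to the right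
of `I`) then `σ(F,G) = −F₊·G_c`, while if `b₁ ≤ a` (`I₁` to the left of `I`) then
`σ(F,G) = −F₋·G_c`. -/
theorem stmt_14 (a b a₁ b₁ : ℝ)
    (f₀ f₁ : ℝ → ℝ) (h : SchwartzMap ℝ ℝ) (hf₀ : deriv ⇑h = f₀)
    (hf₀loc : tsupport f₀ ⊆ Set.Ioo a b)
    (hf₁ : ContDiff ℝ (⊤ : ℕ∞) f₁) (hf₁' : IsSchwartzFn (deriv f₁))
    (hf₁loc : tsupport (deriv f₁) ⊆ Set.Ioo a b)
    (Fp Fm : ℝ) (hFp : Tendsto f₁ atTop (𝓝 Fp)) (hFm : Tendsto f₁ atBot (𝓝 Fm))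
    (g₀ g₁ : ℝ → ℝ) (hg₀ : IsSchwartzFn g₀) (hg₀loc : tsupport g₀ ⊆ Set.Ioo a₁ b₁)
    (hg₁ : ContDiff ℝ (⊤ : ℕ∞) g₁) (hg₁' : IsSchwartzFn (deriv g₁))
    (hg₁loc : tsupport (deriv g₁) ⊆ Set.Ioo a₁ b₁)
    (Gl : ℝ) (hGp : Tendsto g₁ atTop (𝓝 Gl)) (hGm : Tendsto g₁ atBot (𝓝 Gl)) :
    (b ≤ a₁ → (∫ x, (f₀ x * g₁ x - f₁ x * g₀ x)) = -(Fp * ∫ x, g₀ x)) ∧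
    (b₁ ≤ a → (∫ x, (f₀ x * g₁ x - f₁ x * g₀ x)) = -(Fm * ∫ x, g₀ x)) := by
  obtain ⟨G₀, hG₀⟩ := hg₀
  have hf₁d : Differentiable ℝ f₁ := hf₁.differentiable (by simp)
  have hg₁d : Differentiable ℝ g₁ := hg₁.differentiable (by simp)
  have hdf₁z : ∀ x, x ∉ Set.Ioo a b → deriv f₁ x = 0 := fun x hx =>
    image_eq_zero_of_notMem_tsupport (fun hmem => hx (hf₁loc hmem))
  have hdg₁z : ∀ x, x ∉ Set.Ioo a₁ b₁ → deriv g₁ x = 0 := fun x hx =>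
    image_eq_zero_of_notMem_tsupport (fun hmem => hx (hg₁loc hmem))
  have hf₀z : ∀ x, x ∉ Set.Ioo a b → f₀ x = 0 := fun x hx =>
    image_eq_zero_of_notMem_tsupport (fun hmem => hx (hf₀loc hmem))
  have hg₀z : ∀ x, x ∉ Set.Ioo a₁ b₁ → g₀ x = 0 := fun x hx =>
    image_eq_zero_of_notMem_tsupport (fun hmem => hx (hg₀loc hmem))
  -- constancy facts
  have hf₁r : ∀ x, b ≤ x → f₁ x = Fp :=
    aux_const_right _ hf₁d b (fun x hx => hdf₁z x (fun hm => absurd hm.2 (not_lt.2 hx))) Fp hFp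
  have hf₁l : ∀ x, x ≤ a → f₁ x = Fm :=
    aux_const_left _ hf₁d a (fun x hx => hdf₁z x (fun hm => absurd hm.1 (not_lt.2 hx))) Fm hFm
  have hg₁r : ∀ x, b₁ ≤ x → g₁ x = Gl :=
    aux_const_right _ hg₁d b₁ (fun x hx => hdg₁z x (fun hm => absurd hm.2 (not_lt.2 hx))) Gl hGp
  have hg₁l : ∀ x, x ≤ a₁ → g₁ x = Gl :=
    aux_const_left _ hg₁d a₁ (fun x hx => hdg₁z x (fun hm => absurd hm.1 (not_lt.2 hx))) Gl hGm
  have hf₀int : (∫ x, f₀ x) = 0 := by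
    rw [← hf₀]; exact aux_integral_deriv_zero h a b (hf₀ ▸ hf₀loc)
  have hg₀intg : Integrable g₀ := hG₀ ▸ G₀.integrable
  have hf₀intg : Integrable f₀ := by
    have := (SchwartzMap.derivCLM ℝ ℝ h).integrable (μ := volume)
    have heq : ⇑(SchwartzMap.derivCLM ℝ ℝ h) = f₀ := by
      funext x; rw [SchwartzMap.derivCLM_apply, hf₀]
    rwa [heq] at this
  constructor
  · intro hba₁
    have key : (fun x => f₀ x * g₁ x - f₁ x * g₀ x) = fun x => Gl * f₀ x - Fp * g₀ x := by
      funext x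
      rcases eq_or_ne (f₀ x) 0 with h1 | h1
      · rcases eq_or_ne (g₀ x) 0 with h2 | h2
        · simp [h1, h2]
        · have hx : x ∈ Set.Ioo a₁ b₁ := by
            by_contra hc; exact h2 (hg₀z x hc)
          rw [h1, hf₁r x (hba₁.trans (le_of_lt hx.1))]; ring
      · have hx : x ∈ Set.Ioo a b := by
          by_contra hc; exact h1 (hf₀z x hc)
        have hg1 : g₁ x = Gl := hg₁l x ((le_of_lt hx.2).trans hba₁)
        rcases eq_or_ne (g₀ x) 0 with h2 | h2
        · rw [hg1, h2]; ring
        · have hx2 : x ∈ Set.Ioo a₁ b₁ := by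
            by_contra hc; exact h2 (hg₀z x hc)
          rw [hg1, hf₁r x (hba₁.trans (le_of_lt hx2.1))]; ring
    rw [key, integral_sub (hf₀intg.const_mul Gl) (hg₀intg.const_mul Fp),
      integral_const_mul, integral_const_mul, hf₀int]
    ring
  · intro hb₁a
    have key : (fun x => f₀ x * g₁ x - f₁ x * g₀ x) = fun x => Gl * f₀ x - Fm * g₀ x := by
      funext x
      rcases eq_or_ne (f₀ x) 0 with h1 | h1
      · rcases eq_or_ne (g₀ x) 0 with h2 | h2
        · simp [h1, h2]
        · have hx : x ∈ Set.Ioo a₁ b₁ := by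
            by_contra hc; exact h2 (hg₀z x hc)
          rw [h1, hf₁l x ((le_of_lt hx.2).trans hb₁a)]; ring
      · have hx : x ∈ Set.Ioo a b := by
          by_contra hc; exact h1 (hf₀z x hc)
        have hg1 : g₁ x = Gl := hg₁r x (hb₁a.trans (le_of_lt hx.1))
        rcases eq_or_ne (g₀ x) 0 with h2 | h2
        · rw [hg1, h2]; ring
        · have hx2 : x ∈ Set.Ioo a₁ b₁ := by
            by_contra hc; exact h2 (hg₀z x hc)
          rw [hg1, hf₁l x ((le_of_lt hx2.2).trans hb₁a)]; ring
    rw [key, integral_sub (hf₀intg.const_mul Gl) (hg₀intg.const_mul Fm),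
      integral_const_mul, integral_const_mul, hf₀int]
    ring
end

section
/- (DHR localization on observables.) Let I and I₁ be disjoint bounded open intervals. Let F = (f₀,f₁) ∈ V_f be localized in I (f₀ ∈ 𝒮 with supp f₀ ⊆ I; f₁ smooth with f₁′ ∈ 𝒮 and supp f₁′ ⊆ I) and let G = (g₀,g₁) ∈ V_a be localized in I₁ (g₀ = h′ with h ∈ 𝒮 and supp g₀ ⊆ I₁; g₁ ∈ 𝒮 with supp g₁′ ⊆ I₁). Then σ(F,G) = 0. (Hence every charged field automorphism ad W(F), F ∈ V_f(I), acts trivially on observables localized spacelike to I: these automorphisms satisfy the DHR superselection criterion for the observable net A.) -/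
open MeasureTheory Filter Topology

lemma fderiv_eq_zero_of_deriv_eq_zero {f : ℝ → ℝ} {x : ℝ}
    (hd : deriv f x = 0) : fderiv ℝ f x = 0 := by
  rw [← toSpanSingleton_deriv, hd]
  ext y
  simp

/-- A Schwartz function whose derivative is supported in `Ioo a₁ b₁` vanishes
outside `Ioo a₁ b₁`. -/
lemma schwartz_eq_zero_of_deriv_tsupport_subset (a₁ b₁ : ℝ) (φ : SchwartzMap ℝ ℝ)
    (hloc : tsupport (deriv ⇑φ) ⊆ Set.Ioo a₁ b₁) {x : ℝ} (hx : x ≤ a₁ ∨ b₁ ≤ x) :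
    φ x = 0 := by
  have hzero : Tendsto (⇑φ) (cocompact ℝ) (𝓝 0) := zero_at_infty φ
  rw [cocompact_eq_atBot_atTop] at hzero
  have hderiv0 : ∀ y : ℝ, y ≤ a₁ ∨ b₁ ≤ y → deriv ⇑φ y = 0 := by
    intro y hy
    apply image_eq_zero_of_notMem_tsupport
    intro hmem
    have := hloc hmem
    rcases hy with hy | hy
    · exact absurd this.1 (not_lt.2 hy)
    · exact absurd this.2 (not_lt.2 hy)
  have hconst : ∀ s : Set ℝ, Convex ℝ s → UniqueDiffOn ℝ s →
      (∀ y ∈ s, y ≤ a₁ ∨ b₁ ≤ y) → ∀ y ∈ s, ∀ z ∈ s, φ y = φ z := by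
    intro s hs hu hsub y hy z hz
    apply hs.is_const_of_fderivWithin_eq_zero φ.differentiable.differentiableOn _ hy hz
    intro w hw
    rw [fderivWithin_eq_fderiv (hu w hw) (φ.differentiable w)]
    exact fderiv_eq_zero_of_deriv_eq_zero (hderiv0 w (hsub w hw))
  rcases hx with hx | hx
  · have hc := hconst (Set.Iic a₁) (convex_Iic _) (uniqueDiffOn_Iic a₁)
      (fun y hy => Or.inl hy)
    have htend : Tendsto (fun _ : ℝ => φ x) atBot (𝓝 0) := by
      refine (hzero.mono_left le_sup_left).congr' ?_
      filter_upwards [eventually_le_atBot a₁] with y hy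
      exact hc y hy x hx
    exact tendsto_nhds_unique tendsto_const_nhds htend
  · have hc := hconst (Set.Ici b₁) (convex_Ici _) (uniqueDiffOn_Ici b₁)
      (fun y hy => Or.inr hy)
    have htend : Tendsto (fun _ : ℝ => φ x) atTop (𝓝 0) := by
      refine (hzero.mono_left le_sup_right).congr' ?_
      filter_upwards [eventually_ge_atTop b₁] with y hy
      exact hc y hy x hx
    exact tendsto_nhds_unique tendsto_const_nhds htend

/-- (DHR localization on observables.)  Let `I = (a,b)` and
`I₁ = (a₁,b₁)` be disjoint bounded open intervals, `F ∈ V_f` localized in `I` and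
`G ∈ V_a` localized in `I₁`.  Then `σ(F,G) = 0`: charged field automorphisms act
trivially on observables localized spacelike to their localization region (DHR
superselection criterion). -/
theorem stmt_15 (a b a₁ b₁ : ℝ)
    (hdisj : Set.Ioo a b ∩ Set.Ioo a₁ b₁ = ∅)
    (f₀ f₁ : ℝ → ℝ) (hf₀ : IsSchwartzFn f₀) (hf₀loc : tsupport f₀ ⊆ Set.Ioo a b)
    (hf₁ : ContDiff ℝ (⊤ : ℕ∞) f₁) (hf₁' : IsSchwartzFn (deriv f₁))
    (hf₁loc : tsupport (deriv f₁) ⊆ Set.Ioo a b)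
    (g₀ g₁ : ℝ → ℝ) (h : SchwartzMap ℝ ℝ) (hg₀ : deriv ⇑h = g₀)
    (hg₀loc : tsupport g₀ ⊆ Set.Ioo a₁ b₁)
    (hg₁ : IsSchwartzFn g₁) (hg₁loc : tsupport (deriv g₁) ⊆ Set.Ioo a₁ b₁) :
    (∫ x, (f₀ x * g₁ x - f₁ x * g₀ x)) = 0 := by
  obtain ⟨G, hG⟩ := hg₁
  set c : ℝ := f₁ ((a₁ + b₁) / 2) with hc
  have hnotmem : ∀ x ∈ Set.Ioo a₁ b₁, x ∉ Set.Ioo a b := by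
    intro x hx hx'
    exact absurd (Set.mem_inter hx' hx) (by rw [hdisj]; exact Set.notMem_empty x)
  have hnotmem' : ∀ x ∈ Set.Ioo a b, x ∉ Set.Ioo a₁ b₁ := by
    intro x hx hx'
    exact absurd (Set.mem_inter hx hx') (by rw [hdisj]; exact Set.notMem_empty x)
  -- pointwise: f₀ x * g₁ x = 0
  have h1 : ∀ x, f₀ x * g₁ x = 0 := by
    intro x
    by_cases hx : x ∈ tsupport f₀
    · have hx' : x ∉ Set.Ioo a₁ b₁ := hnotmem' x (hf₀loc hx)
      have hxle : x ≤ a₁ ∨ b₁ ≤ x := by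
        by_contra hcon
        push_neg at hcon
        exact hx' ⟨hcon.1, hcon.2⟩
      have := schwartz_eq_zero_of_deriv_tsupport_subset a₁ b₁ G
        (by rw [hG]; exact hg₁loc) hxle
      rw [hG] at this
      rw [this, mul_zero]
    · rw [image_eq_zero_of_notMem_tsupport hx, zero_mul]
  -- pointwise: f₁ x * g₀ x = c * g₀ x
  have h2 : ∀ x, f₁ x * g₀ x = c * g₀ x := by
    intro x
    by_cases hx : x ∈ tsupport g₀
    · have hx' : x ∈ Set.Ioo a₁ b₁ := hg₀loc hx
      have hmid : (a₁ + b₁) / 2 ∈ Set.Ioo a₁ b₁ := ⟨by linarith [hx'.1, hx'.2],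
        by linarith [hx'.1, hx'.2]⟩
      have hfc : f₁ x = c := by
        refine (convex_Ioo a₁ b₁).is_const_of_fderivWithin_eq_zero
          ((hf₁.differentiable (by simp)).differentiableOn) (fun w hw => ?_) hx' hmid
        rw [fderivWithin_of_isOpen isOpen_Ioo hw]
        refine fderiv_eq_zero_of_deriv_eq_zero (image_eq_zero_of_notMem_tsupport ?_)
        intro hmem
        exact hnotmem w hw (hf₁loc hmem)
      rw [hfc]
    · rw [image_eq_zero_of_notMem_tsupport hx, mul_zero, mul_zero]
  -- rewrite the integrand
  have hfun : (fun x => f₀ x * g₁ x - f₁ x * g₀ x) = fun x => -(c * deriv ⇑h x) := by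
    funext x
    rw [h1 x, h2 x, hg₀, zero_sub]
  rw [hfun]
  -- ∫ deriv h = 0
  set l : ℝ := min a₁ b₁ - 1 with hl
  set r : ℝ := max a₁ b₁ + 1 with hr
  have hlr : l ≤ r := by
    have : min a₁ b₁ ≤ max a₁ b₁ := min_le_max
    simp only [hl, hr]; linarith
  have hsupp : ∀ x, x ∉ Set.Ioc l r → deriv ⇑h x = 0 := by
    intro x hx
    apply image_eq_zero_of_notMem_tsupport
    intro hmem
    have hx' : x ∈ Set.Ioo a₁ b₁ := hg₀loc (hg₀ ▸ hmem)
    apply hx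
    constructor
    · have : min a₁ b₁ ≤ a₁ := min_le_left _ _
      simp only [hl]; linarith [hx'.1]
    · have : b₁ ≤ max a₁ b₁ := le_max_right _ _
      simp only [hr]; linarith [hx'.2]
  have hderiv_cont : Continuous (deriv ⇑h) := (h.smooth ⊤).continuous_deriv (by norm_num)
  have hint : (∫ x, deriv ⇑h x) = 0 := by
    rw [← setIntegral_eq_integral_of_forall_compl_eq_zero hsupp,
      ← intervalIntegral.integral_of_le hlr,
      intervalIntegral.integral_deriv_eq_sub (fun x _ => h.differentiable x)
        (hderiv_cont.intervalIntegrable l r)]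
    have hzl : h l = 0 := schwartz_eq_zero_of_deriv_tsupport_subset a₁ b₁ h
      (hg₀ ▸ hg₀loc) (Or.inl (by simp only [hl]; linarith [min_le_left a₁ b₁]))
    have hzr : h r = 0 := schwartz_eq_zero_of_deriv_tsupport_subset a₁ b₁ h
      (hg₀ ▸ hg₀loc) (Or.inr (by simp only [hr]; linarith [le_max_right a₁ b₁]))
    rw [hzl, hzr, sub_zero]
  rw [integral_neg, integral_const_mul, hint, mul_zero, neg_zero]
end

section
/- (Positivity of the non-regular state on the elementary Weyl algebra.) For every n ∈ ℕ, every family (c_k, ν_k) ∈ ℝ × ℝ (k = 1,…,n) and every a : Fin n → ℂ, the sum ∑_{i,j} conj(a_i)·a_j·exp((𝐢/2)(c_i ν_j − c_j ν_i))·(1 if c_i = c_j, else 0) is a nonnegative real number. (Equivalently, the functional ω_L(W(c,ν)) := δ_{c,0} is a state on the Weyl algebra of (ℝ², σ₂); its GNS space is the non-separable space ℓ²(ℝ_d).) -/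
open scoped ComplexConjugate

open Finset in
/-- (Positivity of the non-regular state on the elementary Weyl
algebra.)  For every `n`, every family `(c_k, ν_k) ∈ ℝ × ℝ` and every `a : Fin n → ℂ`,
the sum `∑_{i,j} conj(a_i)·a_j·exp((i/2)(c_i ν_j − c_j ν_i))·δ_{c_i,c_j}` is a
nonnegative real number.  (Equivalently `ω_L(W(c,ν)) = δ_{c,0}` is a state on the Weyl
algebra of `(ℝ², σ₂)`.) -/
theorem stmt_16 (n : ℕ) (c ν : Fin n → ℝ) (a : Fin n → ℂ) :
    0 ≤ (∑ i : Fin n, ∑ j : Fin n, conj (a i) * a j *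
          Complex.exp (Complex.I / 2 * ((c i * ν j - c j * ν i : ℝ) : ℂ)) *
          (if c i = c j then 1 else 0)).re ∧
    (∑ i : Fin n, ∑ j : Fin n, conj (a i) * a j *
          Complex.exp (Complex.I / 2 * ((c i * ν j - c j * ν i : ℝ) : ℂ)) *
          (if c i = c j then 1 else 0)).im = 0 := by
  set f : Fin n → ℂ := fun i => a i * Complex.exp (Complex.I / 2 * ((c i * ν i : ℝ) : ℂ))
    with hf
  set S : ℝ → ℂ := fun v => ∑ j ∈ Finset.univ.filter (fun j => c j = v), f j with hS
  have hterm : ∀ i j : Fin n, conj (a i) * a j *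
      Complex.exp (Complex.I / 2 * ((c i * ν j - c j * ν i : ℝ) : ℂ)) *
      (if c i = c j then 1 else 0) =
      conj (f i) * f j * (if c i = c j then 1 else 0) := by
    intro i j
    by_cases h : c i = c j
    · simp only [if_pos h]
      have key : conj (f i) * f j =
          conj (a i) * a j *
            Complex.exp (Complex.I / 2 * ((c i * ν j - c j * ν i : ℝ) : ℂ)) := by
        simp only [hf, map_mul]
        have h1 : (starRingEnd ℂ) (Complex.exp (Complex.I / 2 * ((c i * ν i : ℝ) : ℂ))) =
            Complex.exp (-(Complex.I / 2 * ((c i * ν i : ℝ) : ℂ))) := by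
          rw [← Complex.exp_conj]
          congr 1
          simp [map_mul, map_div₀, Complex.conj_I, Complex.conj_ofReal, map_ofNat]
          ring
        rw [h1, mul_mul_mul_comm, ← Complex.exp_add]
        congr 2
        have h2 : (c i * ν j - c j * ν i : ℝ) = c j * ν j - c i * ν i := by rw [h]
        rw [h2]
        push_cast
        ring
      rw [key]
    · simp [if_neg h]
  have hinner : ∀ i : Fin n,
      (∑ j : Fin n, conj (f i) * f j * (if c i = c j then 1 else 0)) =
      conj (f i) * S (c i) := by
    intro i
    rw [hS, Finset.mul_sum, Finset.sum_filter]
    refine Finset.sum_congr rfl fun j _ => ?_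
    rcases eq_or_ne (c i) (c j) with h | h
    · rw [if_pos h, if_pos h.symm, mul_one]
    · rw [if_neg h, if_neg (fun hh => h hh.symm), mul_zero]
  have hfiber : (∑ i : Fin n, conj (f i) * S (c i)) =
      ∑ v ∈ Finset.univ.image c, ((Complex.normSq (S v) : ℝ) : ℂ) := by
    rw [← Finset.sum_fiberwise_of_maps_to (g := c) (t := Finset.univ.image c)
      (fun i _ => Finset.mem_image_of_mem c (Finset.mem_univ i))]
    refine Finset.sum_congr rfl fun v hv => ?_
    have : (∑ i ∈ Finset.univ.filter (fun i => c i = v), conj (f i) * S (c i)) =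
        (∑ i ∈ Finset.univ.filter (fun i => c i = v), conj (f i)) * S v := by
      rw [Finset.sum_mul]
      refine Finset.sum_congr rfl fun i hi => ?_
      rw [(Finset.mem_filter.mp hi).2]
    rw [this, ← map_sum]
    show (starRingEnd ℂ) (S v) * S v = _
    rw [mul_comm, Complex.mul_conj]
  have htotal : (∑ i : Fin n, ∑ j : Fin n, conj (a i) * a j *
      Complex.exp (Complex.I / 2 * ((c i * ν j - c j * ν i : ℝ) : ℂ)) *
      (if c i = c j then 1 else 0)) =
      ((∑ v ∈ Finset.univ.image c, Complex.normSq (S v) : ℝ) : ℂ) := by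
    calc (∑ i : Fin n, ∑ j : Fin n, conj (a i) * a j *
        Complex.exp (Complex.I / 2 * ((c i * ν j - c j * ν i : ℝ) : ℂ)) *
        (if c i = c j then 1 else 0))
        = ∑ i : Fin n, conj (f i) * S (c i) := by
          refine Finset.sum_congr rfl fun i _ => ?_
          rw [← hinner i]
          exact Finset.sum_congr rfl fun j _ => hterm i j
      _ = ∑ v ∈ Finset.univ.image c, ((Complex.normSq (S v) : ℝ) : ℂ) := hfiber
      _ = ((∑ v ∈ Finset.univ.image c, Complex.normSq (S v) : ℝ) : ℂ) := by push_cast; rfl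
  rw [htotal]
  constructor
  · rw [Complex.ofReal_re]
    exact Finset.sum_nonneg fun v _ => Complex.normSq_nonneg _
  · exact Complex.ofReal_im _
end

section
/- (Regularity of the neutral subspace and its generator.) In E := lp (fun _ : ℝ => ℂ) 2, for n ∈ ℝ define M_n f := (fun c => exp(𝐢·n·c)·f(c)). Then: (a) M_n maps E into E and is a linear isometric bijection; (b) for every f ∈ E the map ℝ → E, n ↦ M_n f, is continuous (the one-parameter group n ↦ M_n is strongly continuous); (c) for every c ∈ ℝ, with δ_c := lp.single 2 c 1, one has (1/n)·(M_n δ_c − δ_c) → 𝐢·c·δ_c in E as n → 0, i.e. each δ_c is an eigenvector, with eigenvalue c, of the self-adjoint generator Φ_N of the group (Φ_N |c⟩ = c |c⟩). -/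
/-!
Multiplication by a unimodular function is an isometry of any `ℓᵖ` space, and if the function
depends continuously on a parameter, then for `p < ∞` dominated convergence of `∑ ‖·‖ᵖ` makes the
resulting family strongly continuous. On `δ_c` the operator `M_n` acts by the scalar
`exp (i n c)`, whose derivative at `n = 0` is `i c`.
-/

open Filter Topology
open scoped ENNReal

namespace lp

variable {α : Type*} {E : α → Type*} [∀ i, NormedAddCommGroup (E i)] {p : ℝ≥0∞}

theorem tendsto_of_dominated_convergence [Fact (1 ≤ p)] (hp : p ≠ ∞) {ι : Type*}
    {l : Filter ι} {F : ι → lp E p} {f : lp E p} {g : α → ℝ} (hg : Memℓp g p)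
    (h_bound : ∀ᶠ k in l, ∀ i, ‖F k i‖ ≤ g i)
    (h_lim : ∀ i, Tendsto (fun k => F k i) l (𝓝 (f i))) :
    Tendsto F l (𝓝 f) := by
  have hp' : 0 < p.toReal := ENNReal.toReal_pos (zero_lt_one.trans_le Fact.out).ne' hp
  set G : α → ℝ := fun i => ‖g i‖ + ‖f i‖
  have hG : Summable fun i => ‖G i‖ ^ p.toReal :=
    (memℓp_gen_iff hp').1 (hg.norm.add (lp.memℓp f).norm)
  have h_rpow : Tendsto (fun k => ‖F k - f‖ ^ p.toReal) l (𝓝 0) := by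
    simp_rw [lp.norm_rpow_eq_tsum hp', coeFn_sub, Pi.sub_apply]
    rw [← tsum_zero]
    refine tendsto_tsum_of_dominated_convergence hG (fun i => ?_) ?_
    · simpa [Real.zero_rpow hp'.ne'] using
        (((h_lim i).sub_const (f i)).norm).rpow_const (Or.inr hp'.le)
    · filter_upwards [h_bound] with k hk i
      rw [Real.norm_of_nonneg (by positivity)]
      gcongr
      calc ‖F k i - f i‖ ≤ ‖F k i‖ + ‖f i‖ := norm_sub_le _ _
        _ ≤ ‖g i‖ + ‖f i‖ := by gcongr; exact (hk i).trans (Real.le_norm_self _)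
        _ = ‖G i‖ := (Real.norm_of_nonneg (by positivity)).symm
  rw [tendsto_iff_norm_sub_tendsto_zero]
  simpa [← Real.rpow_mul (norm_nonneg _), hp'.ne', Real.zero_rpow (inv_ne_zero hp'.ne')] using
    h_rpow.rpow_const (p := p.toReal⁻¹) (Or.inr (inv_nonneg.2 hp'.le))

variable {𝕜 : Type*} [NormedField 𝕜] [∀ i, NormedSpace 𝕜 (E i)]

theorem _root_.Memℓp.smul_of_norm_le_one {f : ∀ i, E i} (hf : Memℓp f p) {u : α → 𝕜}
    (hu : ∀ i, ‖u i‖ ≤ 1) : Memℓp (fun i => u i • f i) p :=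
  hf.mono' fun i => by
    rw [norm_smul]
    exact mul_le_of_le_one_left (norm_nonneg _) (hu i)

variable [Fact (1 ≤ p)]

def unimodularSMul (u : α → 𝕜) (hu : ∀ i, ‖u i‖ = 1) : lp E p ≃ₗᵢ[𝕜] lp E p where
  toFun f := ⟨fun i => u i • f i, (lp.memℓp f).smul_of_norm_le_one fun i => (hu i).le⟩
  invFun f := ⟨fun i => (u i)⁻¹ • f i,
    (lp.memℓp f).smul_of_norm_le_one fun i => by rw [norm_inv, hu, inv_one]⟩
  map_add' f g := lp.ext <| funext fun i => smul_add (u i) (f i) (g i)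
  map_smul' c f := lp.ext <| funext fun i => smul_comm (u i) c (f i)
  left_inv f := lp.ext <| funext fun i =>
    inv_smul_smul₀ (norm_ne_zero_iff.1 (by rw [hu]; exact one_ne_zero)) (f i)
  right_inv f := lp.ext <| funext fun i =>
    smul_inv_smul₀ (norm_ne_zero_iff.1 (by rw [hu]; exact one_ne_zero)) (f i)
  norm_map' f := by
    have hp : p ≠ 0 := (zero_lt_one.trans_le Fact.out).ne'
    have h (i : α) : ‖u i • f i‖ = ‖f i‖ := by rw [norm_smul, hu, one_mul]
    exact le_antisymm (lp.norm_mono hp fun i => (h i).le) (lp.norm_mono hp fun i => (h i).ge)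

variable {u : α → 𝕜} {hu : ∀ i, ‖u i‖ = 1}

@[simp]
theorem coeFn_unimodularSMul (f : lp E p) :
    ⇑(unimodularSMul u hu f) = fun i => u i • f i :=
  rfl

theorem unimodularSMul_single [DecidableEq α] (i : α) (x : E i) :
    unimodularSMul u hu (lp.single p i x) = u i • lp.single p i x := by
  rw [← lp.single_smul]
  ext j
  rcases eq_or_ne j i with rfl | hji
  · simp
  · simp [Pi.single_eq_of_ne hji]

theorem continuous_unimodularSMul (hp : p ≠ ∞) {β : Type*} [TopologicalSpace β]
    {u : β → α → 𝕜} (hu : ∀ b i, ‖u b i‖ = 1) (hcont : ∀ i, Continuous fun b => u b i)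
    (f : lp E p) : Continuous fun b => unimodularSMul (u b) (hu b) f :=
  continuous_iff_continuousAt.2 fun b =>
    tendsto_of_dominated_convergence hp (lp.memℓp f).norm
      (Eventually.of_forall fun b' i => by simp [norm_smul, hu])
      (fun i => ((hcont i).tendsto b).smul_const (f i))

end lp

open Complex

theorem norm_exp_I_mul_mul (n c : ℝ) : ‖exp (I * n * c)‖ = 1 := by
  simpa [mul_assoc] using norm_exp_I_mul_ofReal (n * c)

/-- The Weyl unitary `W(0, n)` of the neutral subspace, in the GNS representation of `ω_L`. -/
noncomputable def neutralWeyl (n : ℝ) : lp (fun _ : ℝ => ℂ) 2 ≃ₗᵢ[ℂ] lp (fun _ : ℝ => ℂ) 2 :=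
  lp.unimodularSMul (fun c => exp (I * n * c)) (norm_exp_I_mul_mul n)

theorem hasDerivAt_neutralWeyl_single (c : ℝ) :
    HasDerivAt (fun n => neutralWeyl n (lp.single 2 c (1 : ℂ)))
      ((I * c) • lp.single 2 c (1 : ℂ) : lp (fun _ : ℝ => ℂ) 2) 0 := by
  have h_exp : HasDerivAt (fun n : ℝ => exp (I * n * c)) (I * c) 0 := by
    simpa using (((hasDerivAt_id (0 : ℝ)).ofReal_comp.const_mul I).mul_const (c : ℂ)).cexp
  simpa only [neutralWeyl, lp.unimodularSMul_single] using h_exp.smul_const _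

/-- (Regularity of the neutral subspace and its generator.)
On `E = ℓ²(ℝ_d) = lp (fun _ : ℝ => ℂ) 2` there is a family `M` of linear isometric
bijections, `(M n f) c = exp(i n c)·f(c)` (the Weyl unitaries `W(0,n)` of the regular
neutral subspace), such that: (b) for every `f ∈ E` the map `n ↦ M n f` is continuous
(the one-parameter group is strongly continuous); and (c) for every `c`, with
`δ_c = lp.single 2 c 1`, one has `(1/n)(M_n δ_c − δ_c) → i·c·δ_c` as `n → 0`, i.e.
each `δ_c` is an eigenvector with eigenvalue `c` of the self-adjoint generator `Φ_N`. -/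
theorem stmt_19 :
    ∃ M : ℝ → (lp (fun _ : ℝ => ℂ) 2 ≃ₗᵢ[ℂ] lp (fun _ : ℝ => ℂ) 2),
      (∀ (n : ℝ) (f : lp (fun _ : ℝ => ℂ) 2) (c : ℝ),
        (M n f : ∀ _ : ℝ, ℂ) c = Complex.exp (Complex.I * n * c) * (f : ∀ _ : ℝ, ℂ) c) ∧
      (∀ f : lp (fun _ : ℝ => ℂ) 2, Continuous fun n : ℝ => M n f) ∧
      (∀ c : ℝ, Tendsto
        (fun n : ℝ => ((n : ℂ)⁻¹) • (M n (lp.single 2 c (1 : ℂ)) - lp.single 2 c (1 : ℂ)))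
        (𝓝[≠] (0 : ℝ))
        (𝓝 ((Complex.I * c) • (lp.single 2 c (1 : ℂ) : lp (fun _ : ℝ => ℂ) 2)))) := by
  refine ⟨neutralWeyl, fun n f c => rfl, fun f => ?_, fun c => ?_⟩
  · exact lp.continuous_unimodularSMul ENNReal.ofNat_ne_top _ (fun c => by fun_prop) f
  · refine (hasDerivAt_iff_tendsto_slope.1 (hasDerivAt_neutralWeyl_single c)).congr fun n => ?_
    simp only [slope, vsub_eq_sub, sub_zero, neutralWeyl, lp.unimodularSMul_single]
    rw [ofReal_zero, mul_zero, zero_mul, exp_zero, one_smul, ← ofReal_inv]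
    exact (coe_smul _ _).symm
end
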